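/- arXiv:0710.1386 — 4 statements merged into one kernel-verified Lean document; each statement's English description precedes it below -/
import Mathlib

section
/- Under the setting of the main theorem (H symmetric, conditions (C1) and (C2) for q, Q = (t^s), I = Q : 𝔪^q), if additionally s ≥ c(H), then I² = QI. -/
set_option maxHeartbeats 1000000
set_option synthInstance.maxHeartbeats 1000000

open PowerSeries

/-- The numerical semigroup ring `k[[H]]`: power series supported on `H`. -/
noncomputable def ssr (k : Type) [Field k] (H : AddSubmonoid ℕ) :
    Subalgebra k (PowerSeries k) where
  carrier := {f | ∀ n : ℕ, n ∉ H → PowerSeries.coeff n f = 0}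
  mul_mem' := by
    intro f g hf hg n hn
    rw [Set.mem_setOf_eq] at hf hg
    rw [PowerSeries.coeff_mul]
    apply Finset.sum_eq_zero
    rintro ⟨i, j⟩ hij
    replace hij : i + j = n := by simpa using hij
    by_cases hi : i ∈ H
    · have hj : j ∉ H := fun hj => hn (hij ▸ H.add_mem hi hj)
      rw [hg j hj, mul_zero]
    · rw [hf i hi, zero_mul]
  add_mem' := by
    intro f g hf hg n hn
    rw [Set.mem_setOf_eq] at hf hg
    rw [map_add, hf n hn, hg n hn, add_zero]
  one_mem' := by
    intro n hn
    have h0 : n ≠ 0 := fun h => hn (by rw [h]; exact H.zero_mem)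
    simp [PowerSeries.coeff_one, h0]
  zero_mem' := by
    intro n _
    simp
  algebraMap_mem' := by
    intro r n hn
    have h0 : n ≠ 0 := fun h => hn (by rw [h]; exact H.zero_mem)
    simp [PowerSeries.algebraMap_apply, PowerSeries.coeff_C, h0]

/-- The monomial `t^n` as an element of `k[[H]]`, for `n ∈ H`. -/
noncomputable def tp (k : Type) [Field k] (H : AddSubmonoid ℕ) (n : ℕ) (hn : n ∈ H) :
    ssr k H :=
  ⟨PowerSeries.X ^ n, by
    show ∀ m : ℕ, m ∉ H → PowerSeries.coeff m (PowerSeries.X ^ n : PowerSeries k) = 0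
    intro m hm
    rw [PowerSeries.coeff_X_pow]
    exact if_neg (fun h => hm (by rw [h]; exact hn))⟩

/-- The maximal ideal of `k[[H]]`, generated by the monomials `t^n`, `0 < n ∈ H`. -/
noncomputable def mIdeal (k : Type) [Field k] (H : AddSubmonoid ℕ) : Ideal (ssr k H) :=
  Ideal.span {x | ∃ n : ℕ, ∃ hn : n ∈ H, 0 < n ∧ x = tp k H n hn}

/-!
All ideals involved are monomial: `𝔪 ^ q`, `Q` and `I = Q : 𝔪 ^ q` are spanned by the monomials
with exponents in `M_q = q • (H \ {0}) + H`, `s + H` and `s + K`, where `K = (H - M_q) ∩ ℕ`.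
Hence `I ^ 2 = Q * I` reduces to `K + K ⊆ K`. If `x + y + m = c - 1` with `x, y ∈ K` and
`m = w + m'`, `0 < w ∈ H`, `m' ∈ M_(q-1)`, then either `y + w ∈ H`, and `c - 1 = x + (y + w + m')`
lies in `H`, or by symmetry `x + m' ∈ H`, hence `x + m' ∈ M_(q-1)` by (C2) as `m' ≥ a (q - 1)`, and
`c - 1 = y + (w + x + m')` lies in `H`; both contradict `c - 1 ∉ H`. (C1) makes every element
of `I` divisible by `t ^ s`, and `s ≥ c` puts `s + K` inside `H`.
-/

open Pointwise

namespace NumericalSemigroupRing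

section Exponents

variable {H : AddSubmonoid ℕ}

/-- `mIdealPowExps H q` is the set of exponents of the monomials in `𝔪 ^ q`. -/
def mIdealPowExps (H : AddSubmonoid ℕ) : ℕ → Set ℕ
  | 0 => H
  | q + 1 => ((H : Set ℕ) \ {0}) + mIdealPowExps H q

/-- The relative ideal `(H - M) ∩ ℕ`. -/
def semigroupColon (H : AddSubmonoid ℕ) (M : Set ℕ) : Set ℕ :=
  {x | ∀ m ∈ M, x + m ∈ H}

lemma mem_singleton_add_iff {s n : ℕ} {T : Set ℕ} : n ∈ {s} + T ↔ s ≤ n ∧ n - s ∈ T := by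
  simp only [Set.mem_add, Set.mem_singleton_iff, exists_eq_left]
  constructor
  · rintro ⟨m, hm, rfl⟩
    simpa using hm
  · rintro ⟨hsn, hn⟩
    exact ⟨n - s, hn, by omega⟩

lemma mIdealPowExps_subset : ∀ q, mIdealPowExps H q ⊆ H
  | 0 => subset_rfl
  | q + 1 => by
    intro n hn
    obtain ⟨w, hw, m, hm, rfl⟩ := Set.mem_add.1 hn
    exact H.add_mem hw.1 (mIdealPowExps_subset q hm)

lemma add_mIdealPowExps_subset : ∀ q, (H : Set ℕ) + mIdealPowExps H q ⊆ mIdealPowExps H q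
  | 0 => (AddSubmonoid.coe_add_self_eq H).subset
  | q + 1 => by
    rw [mIdealPowExps, add_left_comm]
    exact Set.add_subset_add_left (add_mIdealPowExps_subset q)

lemma mul_le_of_mem_mIdealPowExps {a : ℕ} (hamin : ∀ n ∈ H, n ≠ 0 → a ≤ n) :
    ∀ {q m : ℕ}, m ∈ mIdealPowExps H q → q * a ≤ m
  | 0, _, _ => by simp
  | q + 1, _, hm => by
    obtain ⟨w, ⟨hwH, hw0⟩, m', hm', rfl⟩ := Set.mem_add.1 hm
    have hw := hamin w hwH hw0
    have hqm := mul_le_of_mem_mIdealPowExps hamin hm'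
    rw [Nat.add_mul, one_mul]
    omega

lemma semigroupColon_add_subset (M : Set ℕ) : semigroupColon H M + M ⊆ H :=
  Set.add_subset_iff.2 fun _ hx _ hm => hx _ hm

lemma sub_one_notMem {c : ℕ} (hsym : ∀ n ≤ c - 1, (n ∈ H ↔ c - 1 - n ∉ H)) : c - 1 ∉ H := by
  simpa using (hsym 0 (Nat.zero_le _)).1 H.zero_mem

lemma mem_iff_notMem_of_add_eq {c u v : ℕ} (hsym : ∀ n ≤ c - 1, (n ∈ H ↔ c - 1 - n ∉ H))
    (huv : u + v = c - 1) : u ∈ H ↔ v ∉ H := by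
  obtain rfl : v = c - 1 - u := by omega
  exact hsym u (by omega)

lemma add_add_ne_sub_one {a c q x y m : ℕ} (hsym : ∀ n ≤ c - 1, (n ∈ H ↔ c - 1 - n ∉ H))
    (hamin : ∀ n ∈ H, n ≠ 0 → a ≤ n)
    (hC2 : ∀ n ∈ H, a * (q - 1) ≤ n → n ∈ mIdealPowExps H (q - 1))
    (hx : x ∈ semigroupColon H (mIdealPowExps H q)) (hy : y ∈ semigroupColon H (mIdealPowExps H q))
    (hm : m ∈ mIdealPowExps H q) : x + y + m ≠ c - 1 := by
  intro hsum
  apply sub_one_notMem hsym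
  cases q with
  | zero =>
    rw [← hsum, add_assoc]
    exact hx _ (hy m hm)
  | succ q =>
    obtain ⟨w, ⟨hwH, hw0⟩, m', hm', rfl⟩ := Set.mem_add.1 hm
    by_cases hyw : y + w ∈ H
    · have hywm : y + w + m' ∈ mIdealPowExps H (q + 1) :=
        ⟨y + w, ⟨hyw, fun h => hw0 (Nat.eq_zero_of_add_eq_zero_left h)⟩, m', hm', rfl⟩
      rw [show c - 1 = x + (y + w + m') by omega]
      exact hx _ hywm
    · have hxm : x + m' ∈ H :=
        (mem_iff_notMem_of_add_eq hsym (by omega : x + m' + (y + w) = c - 1)).2 hyw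
      have hle := mul_le_of_mem_mIdealPowExps hamin hm'
      have hxm' : x + m' ∈ mIdealPowExps H q :=
        hC2 _ hxm (by rw [Nat.add_sub_cancel, mul_comm]; omega)
      rw [show c - 1 = y + (w + (x + m')) by omega]
      exact hy _ ⟨w, ⟨hwH, hw0⟩, x + m', hxm', rfl⟩

theorem semigroupColon_add_self_subset {a c q : ℕ} (hc : ∀ n, c ≤ n → n ∈ H)
    (hsym : ∀ n ≤ c - 1, (n ∈ H ↔ c - 1 - n ∉ H)) (hamin : ∀ n ∈ H, n ≠ 0 → a ≤ n)
    (hC2 : ∀ n ∈ H, a * (q - 1) ≤ n → n ∈ mIdealPowExps H (q - 1)) :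
    semigroupColon H (mIdealPowExps H q) + semigroupColon H (mIdealPowExps H q) ⊆
      semigroupColon H (mIdealPowExps H q) := by
  intro n hn m hm
  obtain ⟨x, hx, y, hy, rfl⟩ := Set.mem_add.1 hn
  by_contra hxym
  have hlt : x + y + m < c := by
    by_contra! hge
    exact hxym (hc _ hge)
  -- the complement of `x + y + m` to `c - 1` lies in `H`, so it can be absorbed into `m`
  have hz : c - 1 - (x + y + m) ∈ H :=
    (mem_iff_notMem_of_add_eq hsym (by omega)).2 hxym
  exact add_add_ne_sub_one hsym hamin hC2 hx hy
    (add_mIdealPowExps_subset q (Set.add_mem_add hz hm)) (by omega)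

lemma mem_singleton_add_semigroupColon {M : Set ℕ} {c s x : ℕ} (hM : ∀ n, c ≤ n → n ∈ M)
    (hF : c - 1 ∉ H) (hx : ∀ m ∈ M, x + m ∈ {s} + (H : Set ℕ)) :
    x ∈ {s} + semigroupColon H M := by
  have hsx : s ≤ x := by
    by_contra! hxs
    have h := (mem_singleton_add_iff.1 (hx (s - x + (c - 1)) (hM _ (by omega)))).2
    rw [show x + (s - x + (c - 1)) - s = c - 1 by omega] at h
    exact hF h
  refine mem_singleton_add_iff.2 ⟨hsx, fun m hm => ?_⟩
  have h := (mem_singleton_add_iff.1 (hx m hm)).2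
  rwa [show x + m - s = x - s + m by omega] at h

end Exponents

section Support

variable {R : Type*} [Semiring R]

def coeffSupport (f : R⟦X⟧) : Set ℕ := Function.support fun n => coeff n f

lemma coeffSupport_subset_iff {f : R⟦X⟧} {S : Set ℕ} :
    coeffSupport f ⊆ S ↔ ∀ n ∉ S, coeff n f = 0 :=
  Function.support_subset_iff'

lemma coeffSupport_zero : coeffSupport (0 : R⟦X⟧) = ∅ := by
  simp [coeffSupport]

lemma coeffSupport_add_subset (f g : R⟦X⟧) :
    coeffSupport (f + g) ⊆ coeffSupport f ∪ coeffSupport g := by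
  simpa only [coeffSupport, map_add] using Function.support_add _ _

lemma coeffSupport_mul_subset (f g : R⟦X⟧) :
    coeffSupport (f * g) ⊆ coeffSupport f + coeffSupport g := by
  refine coeffSupport_subset_iff.2 fun n hn => ?_
  rw [coeff_mul]
  refine Finset.sum_eq_zero ?_
  rintro ⟨i, j⟩ hij
  rw [Finset.HasAntidiagonal.mem_antidiagonal] at hij
  by_cases hi : coeff i f = 0
  · rw [hi, zero_mul]
  · have hj : coeff j g = 0 := by
      by_contra hj
      exact hn ⟨i, hi, j, hj, hij⟩
    rw [hj, mul_zero]

lemma coeffSupport_X_pow [Nontrivial R] (n : ℕ) : coeffSupport (X ^ n : R⟦X⟧) = {n} := by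
  ext m
  simp [coeffSupport, coeff_X_pow]

end Support

section MonomialIdeal

variable {k : Type} [Field k] {H : AddSubmonoid ℕ}

lemma mem_ssr_iff {f : k⟦X⟧} : f ∈ ssr k H ↔ coeffSupport f ⊆ H :=
  coeffSupport_subset_iff.symm

@[simp]
lemma coe_tp (n : ℕ) (hn : n ∈ H) : (tp k H n hn : k⟦X⟧) = X ^ n :=
  rfl

lemma coeffSupport_tp (n : ℕ) (hn : n ∈ H) : coeffSupport (tp k H n hn : k⟦X⟧) = {n} :=
  coeffSupport_X_pow n

lemma tp_add {m n : ℕ} (hm : m ∈ H) (hn : n ∈ H) (hmn : m + n ∈ H) :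
    tp k H (m + n) hmn = tp k H m hm * tp k H n hn :=
  Subtype.ext (pow_add X m n)

/-- Defined as a span so that no closure condition on `S` is needed; when `H + S ⊆ S` its
elements are exactly those supported in `S`. -/
noncomputable def monomialIdeal (k : Type) [Field k] (H : AddSubmonoid ℕ) (S : Set ℕ) :
    Ideal (ssr k H) :=
  Ideal.span {f | coeffSupport (f : k⟦X⟧) ⊆ S}

lemma mem_monomialIdeal_of_coeffSupport_subset {S : Set ℕ} {f : ssr k H}
    (hf : coeffSupport (f : k⟦X⟧) ⊆ S) : f ∈ monomialIdeal k H S :=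
  Ideal.subset_span hf

lemma coeffSupport_subset_of_mem_monomialIdeal {S : Set ℕ} (hS : (H : Set ℕ) + S ⊆ S)
    {f : ssr k H} (hf : f ∈ monomialIdeal k H S) : coeffSupport (f : k⟦X⟧) ⊆ S := by
  induction hf using Submodule.span_induction with
  | mem f hf => exact hf
  | zero => simp [coeffSupport_zero]
  | add f g _ _ hf hg => exact (coeffSupport_add_subset _ _).trans (Set.union_subset hf hg)
  | smul r f _ hf =>
    exact (coeffSupport_mul_subset _ _).trans ((Set.add_subset_add (mem_ssr_iff.1 r.2) hf).trans hS)

lemma monomialIdeal_mono {S T : Set ℕ} (hST : S ⊆ T) :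
    monomialIdeal k H S ≤ monomialIdeal k H T :=
  Ideal.span_mono fun _ hf => hf.trans hST

lemma monomialIdeal_mul_le (S T : Set ℕ) :
    monomialIdeal k H S * monomialIdeal k H T ≤ monomialIdeal k H (S + T) := by
  rw [monomialIdeal, monomialIdeal, Ideal.span_mul_span']
  refine Ideal.span_mono ?_
  rintro _ ⟨f, hf, g, hg, rfl⟩
  exact (coeffSupport_mul_subset _ _).trans (Set.add_subset_add hf hg)

lemma mIdeal_pow_le_monomialIdeal :
    ∀ q, mIdeal k H ^ q ≤ monomialIdeal k H (mIdealPowExps H q)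
  | 0 => by
    rw [pow_zero, Ideal.one_eq_top]
    exact fun f _ => mem_monomialIdeal_of_coeffSupport_subset (mem_ssr_iff.1 f.2)
  | q + 1 => by
    have hm : mIdeal k H ≤ monomialIdeal k H ((H : Set ℕ) \ {0}) := by
      refine Ideal.span_mono ?_
      rintro _ ⟨n, hn, hn0, rfl⟩
      change coeffSupport _ ⊆ _
      rw [coeffSupport_tp, Set.singleton_subset_iff]
      exact ⟨hn, hn0.ne'⟩
    rw [pow_succ']
    exact (Ideal.mul_mono hm (mIdeal_pow_le_monomialIdeal q)).trans (monomialIdeal_mul_le _ _)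

lemma tp_mem_mIdeal_pow_iff {q n : ℕ} {hn : n ∈ H} :
    tp k H n hn ∈ mIdeal k H ^ q ↔ n ∈ mIdealPowExps H q := by
  refine ⟨fun h => ?_, fun h => ?_⟩
  · have := coeffSupport_subset_of_mem_monomialIdeal (add_mIdealPowExps_subset q)
      (mIdeal_pow_le_monomialIdeal q h)
    rwa [coeffSupport_tp, Set.singleton_subset_iff] at this
  · induction q generalizing n with
    | zero => simp
    | succ q ih =>
      obtain ⟨w, ⟨hwH, hw0⟩, m, hm, rfl⟩ := Set.mem_add.1 h
      rw [tp_add hwH (mIdealPowExps_subset q hm), pow_succ']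
      exact Ideal.mul_mem_mul (Ideal.subset_span ⟨w, hwH, Nat.pos_of_ne_zero hw0, rfl⟩) (ih hm)

lemma monomialIdeal_singleton_add_le {S : Set ℕ} (hS : S ⊆ H) {s : ℕ} (hs : s ∈ H) :
    monomialIdeal k H ({s} + S) ≤ Ideal.span {tp k H s hs} * monomialIdeal k H S := by
  refine Ideal.span_le.2 fun f hf => ?_
  obtain ⟨g, hg⟩ : X ^ s ∣ (f : k⟦X⟧) := X_pow_dvd_iff.2 fun m hm =>
    coeffSupport_subset_iff.1 hf m fun h => by have := (mem_singleton_add_iff.1 h).1; omega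
  have hgS : coeffSupport g ⊆ S := fun n hn => by
    have hsn : s + n ∈ coeffSupport (f : k⟦X⟧) := by
      simpa [coeffSupport, hg, coeff_X_pow_mul'] using hn
    simpa using (mem_singleton_add_iff.1 (hf hsn)).2
  have hfg : f = tp k H s hs * ⟨g, mem_ssr_iff.2 (hgS.trans hS)⟩ := Subtype.ext hg
  rw [SetLike.mem_coe, hfg]
  exact Ideal.mul_mem_mul (Ideal.mem_span_singleton_self _)
    (mem_monomialIdeal_of_coeffSupport_subset hgS)

lemma add_singleton_add_self_subset (s : ℕ) :
    (H : Set ℕ) + ({s} + (H : Set ℕ)) ⊆ {s} + (H : Set ℕ) := by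
  rw [add_left_comm, AddSubmonoid.coe_add_self_eq]

lemma span_tp_eq_monomialIdeal {s : ℕ} (hs : s ∈ H) :
    Ideal.span {tp k H s hs} = monomialIdeal k H ({s} + H) := by
  refine le_antisymm ?_ ((monomialIdeal_singleton_add_le subset_rfl hs).trans Ideal.mul_le_left)
  rw [Ideal.span_singleton_le_iff_mem]
  refine mem_monomialIdeal_of_coeffSupport_subset ?_
  rw [coeffSupport_tp, Set.singleton_subset_iff]
  exact ⟨s, rfl, 0, H.zero_mem, add_zero s⟩

theorem colon_eq_monomialIdeal {c q s : ℕ} (hs : s ∈ H) (hC1 : ∀ n, c ≤ n → n ∈ mIdealPowExps H q)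
    (hF : c - 1 ∉ H) :
    (Ideal.span {tp k H s hs}).colon ((mIdeal k H ^ q : Ideal (ssr k H)) : Set (ssr k H)) =
      monomialIdeal k H ({s} + semigroupColon H (mIdealPowExps H q)) := by
  rw [span_tp_eq_monomialIdeal]
  refine le_antisymm (fun f hf => mem_monomialIdeal_of_coeffSupport_subset fun n hn => ?_) ?_
  · refine mem_singleton_add_semigroupColon hC1 hF fun m hm => ?_
    have hfm := Submodule.mem_colon.1 hf _
      (tp_mem_mIdeal_pow_iff (hn := mIdealPowExps_subset q hm) |>.2 hm)
    refine coeffSupport_subset_of_mem_monomialIdeal (add_singleton_add_self_subset s) hfm ?_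
    simpa [coeffSupport, coeff_mul_X_pow] using hn
  · refine Ideal.span_le.2 fun f hf => Submodule.mem_colon.2 fun p hp => ?_
    refine monomialIdeal_mono ?_ (monomialIdeal_mul_le _ _ (Ideal.mul_mem_mul
      (mem_monomialIdeal_of_coeffSupport_subset hf) (mIdeal_pow_le_monomialIdeal q hp)))
    rw [add_assoc]
    exact Set.add_subset_add_left (semigroupColon_add_subset _)

end MonomialIdeal

end NumericalSemigroupRing

open NumericalSemigroupRing

theorem stmt10_general (k : Type) [Field k] (H : AddSubmonoid ℕ)
    (a : ℕ) (hamin : ∀ n ∈ H, n ≠ 0 → a ≤ n)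
    (c : ℕ) (hc : ∀ n : ℕ, c ≤ n → n ∈ H)
    (hsym : ∀ n : ℕ, n ≤ c - 1 → (n ∈ H ↔ (c - 1 - n) ∉ H))
    (q : ℕ)
    (hC1 : ∀ n : ℕ, ∀ hn : c ≤ n, tp k H n (hc n hn) ∈ mIdeal k H ^ q)
    (hC2 : ∀ (n : ℕ) (hn : n ∈ H), tp k H n hn ∉ mIdeal k H ^ (q - 1) → n < a * (q - 1))
    (s : ℕ) (hs : s ∈ H)
    (Q : Ideal (ssr k H)) (hQ : Q = Ideal.span {tp k H s hs})
    (I : Ideal (ssr k H)) (hI : I = Submodule.colon Q ((mIdeal k H ^ q : Ideal (ssr k H)) : Set (ssr k H)))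
    (hsc : c ≤ s) :
    I ^ 2 = Q * I := by
  set K := semigroupColon H (mIdealPowExps H q)
  have hK : K + K ⊆ K := semigroupColon_add_self_subset hc hsym hamin fun n hn hle =>
    by_contra fun h => (hC2 n hn (mt tp_mem_mIdeal_pow_iff.1 h)).not_ge hle
  have hIK : I = monomialIdeal k H ({s} + K) := by
    rw [hI, hQ]
    exact colon_eq_monomialIdeal hs (fun n hn => tp_mem_mIdeal_pow_iff.1 (hC1 n hn))
      (sub_one_notMem hsym)
  have hKH : {s} + K ⊆ H := fun n hn => hc n (hsc.trans (mem_singleton_add_iff.1 hn).1)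
  refine le_antisymm ?_ (pow_two I ▸ Ideal.mul_mono_left (hI ▸ Ideal.le_colon))
  calc I ^ 2 = monomialIdeal k H ({s} + K) * monomialIdeal k H ({s} + K) := by rw [pow_two, hIK]
    _ ≤ monomialIdeal k H ({s} + ({s} + K)) := by
      refine (monomialIdeal_mul_le _ _).trans (monomialIdeal_mono ?_)
      rw [add_add_add_comm, add_assoc]
      exact Set.add_subset_add_left (Set.add_subset_add_left hK)
    _ ≤ Ideal.span {tp k H s hs} * monomialIdeal k H ({s} + K) :=
      monomialIdeal_singleton_add_le hKH hs
    _ = Q * I := by rw [hQ, hIK]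

/-- Theorem 2.1 (2): under (C1) and (C2), if `s ≥ c` then `I² = QI`. -/
theorem stmt10 (k : Type) [Field k] (H : AddSubmonoid ℕ) (hfin : (Set.univ \ (H : Set ℕ)).Finite)
    (a : ℕ) (haH : a ∈ H) (ha0 : a ≠ 0) (hamin : ∀ n ∈ H, n ≠ 0 → a ≤ n)
    (c : ℕ) (hc : ∀ n : ℕ, c ≤ n → n ∈ H) (hcmin : ∀ m : ℕ, (∀ n : ℕ, m ≤ n → n ∈ H) → c ≤ m)
    (hsym : ∀ n : ℕ, n ≤ c - 1 → (n ∈ H ↔ (c - 1 - n) ∉ H))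
    (q : ℕ) (hq : 0 < q)
    (hC1 : ∀ n : ℕ, ∀ hn : c ≤ n, tp k H n (hc n hn) ∈ mIdeal k H ^ q)
    (hC2 : ∀ (n : ℕ) (hn : n ∈ H), tp k H n hn ∉ mIdeal k H ^ (q - 1) → n < a * (q - 1))
    (s : ℕ) (hs : s ∈ H) (hs0 : 0 < s)
    (Q : Ideal (ssr k H)) (hQ : Q = Ideal.span {tp k H s hs})
    (I : Ideal (ssr k H)) (hI : I = Submodule.colon Q ((mIdeal k H ^ q : Ideal (ssr k H)) : Set (ssr k H)))
    (hsc : c ≤ s) :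
    I ^ 2 = Q * I :=
  stmt10_general k H a hamin c hc hsym q hC1 hC2 s hs Q hQ I hI hsc
end

section
/- Under the setting of the main theorem (H symmetric, conditions (C1) and (C2) for q, Q = (t^s), I = Q : 𝔪^q), if s ≥ a(q−1), then I³ = QI², and moreover Q ∩ I^{n+1} = QI^n for all n ≥ 0, so the associated graded ring G(I) = ⊕_{n≥0} I^n/I^{n+1} is Cohen–Macaulay. -/
set_option maxHeartbeats 1000000
set_option synthInstance.maxHeartbeats 1000000

open PowerSeries

/-!
All ideals involved are monomial: `Q = (t^s)`, `𝔪^j` and `I = Q : 𝔪^q` consist of the series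
supported on `s + H`, on the set `E_j` of sums of `j` nonzero elements of `H`, and on
`S = {x ∈ H | x + E_q ⊆ s + H}`. In these terms (C1) says `[c, ∞) ⊆ E_q`, and (C2) says that
every `n ∈ H` with `n ≥ a(q-1)` lies in `E_{q-1}`.

Write `S = H ∩ (s + T)` with `T = {z | z + E_q ⊆ H}`. Symmetry of `H` (`n ∉ H` iff
`c - 1 - n ∈ H`) together with (C2) shows that `T` is closed under addition. Hence if `x, y ∈ S`
and `x + y = s + h` with `h ∈ H`, then `h ∈ S`, which is `Q ∩ I² = QI`. Moreover
`x + y + z = s + x' + y'` for some `x', y' ∈ S` whenever `x, y, z ∈ S`, which is `I³ = QI²`: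
either `s + α + β ∈ H` for two of `α, β, γ ∈ {x - s, y - s, z - s}`, or (by symmetry, (C2) and
`s ≥ a(q-1)`) all three of these sums equal `c - 1`; then `α = β = γ` and `x' = s` works.
The two equalities give
`Q ∩ I^{n+1} = QI^n` for all `n` by induction.
-/

open Pointwise

theorem Ideal.pow_add_two_eq_of_pow_three_eq {R : Type*} [CommSemiring R] {Q I : Ideal R}
    (h3 : I ^ 3 = Q * I ^ 2) : ∀ m, I ^ (m + 2) = Q ^ m * I ^ 2
  | 0 => by simp
  | m + 1 => by
    rw [pow_succ' I, Ideal.pow_add_two_eq_of_pow_three_eq h3 m, mul_left_comm, ← pow_succ' I 2,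
      h3, ← mul_assoc, ← pow_succ]

theorem Ideal.inf_pow_succ_eq_mul_pow {R : Type*} [CommSemiring R] {Q I : Ideal R}
    (hQI : Q ≤ I) (h3 : I ^ 3 = Q * I ^ 2) (h2 : Q ⊓ I ^ 2 = Q * I) :
    ∀ n, Q ⊓ I ^ (n + 1) = Q * I ^ n
  | 0 => by simpa using hQI
  | 1 => by simpa using h2
  | m + 2 => by
    have hpow := Ideal.pow_add_two_eq_of_pow_three_eq h3
    have hle : I ^ (m + 1 + 2) ≤ Q := by
      rw [hpow, pow_succ', mul_assoc]
      exact Ideal.mul_le_left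
    rw [inf_eq_right.mpr hle, hpow (m + 1), hpow m, ← mul_assoc, ← pow_succ']

namespace QuasiSocle

variable {k : Type} [Field k] {H : AddSubmonoid ℕ}

theorem coe_tp (n : ℕ) (hn : n ∈ H) : (tp k H n hn : PowerSeries k) = X ^ n := rfl

theorem tp_congr {m n : ℕ} (hm : m ∈ H) (hn : n ∈ H) (h : m = n) :
    tp k H m hm = tp k H n hn := by
  subst h; rfl

theorem tp_mul (m n : ℕ) (hm : m ∈ H) (hn : n ∈ H) :
    tp k H m hm * tp k H n hn = tp k H (m + n) (H.add_mem hm hn) :=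
  Subtype.ext (pow_add X m n).symm

theorem coeff_mul_eq_zero_of_notMem_add {S T : Set ℕ} {f g : PowerSeries k}
    (hf : ∀ n ∉ S, coeff n f = 0) (hg : ∀ n ∉ T, coeff n g = 0) {n : ℕ} (hn : n ∉ S + T) :
    coeff n (f * g) = 0 := by
  rw [coeff_mul]
  refine Finset.sum_eq_zero fun ⟨i, j⟩ hij => ?_
  replace hij : i + j = n := by simpa using hij
  by_cases hi : i ∈ S
  · rw [hg j fun hj => hn ⟨i, hi, j, hj, hij⟩, mul_zero]
  · rw [hf i hi, zero_mul]

variable (k H) in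
noncomputable def monomialIdeal (S : Set ℕ) (hS : S + H ⊆ S) : Ideal (ssr k H) where
  carrier := {f | ∀ n ∉ S, coeff n (f : PowerSeries k) = 0}
  add_mem' {f g} hf hg n hn := by
    rw [Subalgebra.coe_add, map_add, hf n hn, hg n hn, add_zero]
  zero_mem' n _ := by simp
  smul_mem' r f hf n hn := by
    rw [smul_eq_mul, Subalgebra.coe_mul, mul_comm]
    exact coeff_mul_eq_zero_of_notMem_add hf r.2 fun h => hn (hS h)

theorem mem_monomialIdeal {S : Set ℕ} {hS : S + H ⊆ S} {f : ssr k H} :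
    f ∈ monomialIdeal k H S hS ↔ ∀ n ∉ S, coeff n (f : PowerSeries k) = 0 :=
  Iff.rfl

theorem tp_mem_monomialIdeal_iff {S : Set ℕ} {hS : S + H ⊆ S} {n : ℕ} {hn : n ∈ H} :
    tp k H n hn ∈ monomialIdeal k H S hS ↔ n ∈ S := by
  simp only [mem_monomialIdeal, coe_tp, coeff_X_pow]
  constructor
  · intro h
    by_contra hnS
    simpa using h n hnS
  · intro hnS m hm
    exact if_neg fun e => hm (by rwa [e])

theorem monomialIdeal_mul_le {S T U : Set ℕ} {hS : S + H ⊆ S} {hT : T + H ⊆ T}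
    {hU : U + H ⊆ U} (h : S + T ⊆ U) :
    monomialIdeal k H S hS * monomialIdeal k H T hT ≤ monomialIdeal k H U hU :=
  Ideal.mul_le.mpr fun _ hf _ hg _ hn =>
    coeff_mul_eq_zero_of_notMem_add hf hg fun h' => hn (h h')

theorem inf_monomialIdeal_le {S T U : Set ℕ} {hS : S + H ⊆ S} {hT : T + H ⊆ T}
    {hU : U + H ⊆ U} (h : S ∩ T ⊆ U) :
    monomialIdeal k H S hS ⊓ monomialIdeal k H T hT ≤ monomialIdeal k H U hU :=
  fun _ ⟨hf, hg⟩ n hn => by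
    by_cases hnS : n ∈ S
    · exact hg n fun hnT => hn (h ⟨hnS, hnT⟩)
    · exact hf n hnS

theorem mem_singleton_add {s n : ℕ} : n ∈ ({s} + H : Set ℕ) ↔ ∃ h ∈ H, s + h = n := by
  rw [Set.singleton_add, Set.mem_image]
  rfl

theorem tp_dvd_of_coeff_ne_zero {e : ℕ} (he : e ∈ H) {f : ssr k H}
    (hf : ∀ n, coeff n (f : PowerSeries k) ≠ 0 → n ∈ ({e} + H : Set ℕ)) : tp k H e he ∣ f := by
  let g : PowerSeries k := PowerSeries.mk fun m => coeff (m + e) (f : PowerSeries k)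
  have hg : g ∈ ssr k H := fun m hm => by
    by_contra h
    obtain ⟨h, hh, hmh⟩ := mem_singleton_add.mp (hf (m + e) (by simpa [g] using h))
    exact hm (by rwa [show m = h by omega])
  refine ⟨⟨g, hg⟩, Subtype.ext <| PowerSeries.ext fun n => ?_⟩
  rw [Subalgebra.coe_mul, coe_tp, coeff_X_pow_mul']
  split_ifs with hen
  · simp [g, Nat.sub_add_cancel hen]
  · by_contra h
    obtain ⟨h, _, rfl⟩ := mem_singleton_add.mp (hf n h)
    omega

theorem singleton_add_subset (e : ℕ) : ({e} + H : Set ℕ) + H ⊆ {e} + H := by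
  rw [add_assoc, AddSubmonoid.coe_add_self_eq]

theorem add_add_subset {S T : Set ℕ} (hT : T + H ⊆ T) : S + T + H ⊆ S + T := by
  rw [add_assoc]
  exact Set.add_subset_add_left hT

theorem span_tp_eq_monomialIdeal (e : ℕ) (he : e ∈ H) :
    Ideal.span {tp k H e he} = monomialIdeal k H ({e} + H) (singleton_add_subset e) := by
  refine le_antisymm (Ideal.span_le.mpr ?_) fun f hf => Ideal.mem_span_singleton.mpr ?_
  · rintro _ rfl
    exact tp_mem_monomialIdeal_iff.mpr ⟨e, rfl, 0, H.zero_mem, add_zero e⟩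
  · exact tp_dvd_of_coeff_ne_zero he fun n hn => by_contra fun h => hn (hf n h)

variable (k H) in
noncomputable def monomialTerm (f : ssr k H) (n : ℕ) : ssr k H :=
  ⟨monomial n (coeff n (f : PowerSeries k)), fun m hm => by
    rw [coeff_monomial]
    split_ifs with h
    · exact f.2 n (h ▸ hm)
    · rfl⟩

theorem coeff_sum_monomialTerm (f : ssr k H) (N m : ℕ) :
    coeff m ((∑ n ∈ Finset.range N, monomialTerm k H f n : ssr k H) : PowerSeries k) =
      if m < N then coeff m (f : PowerSeries k) else 0 := by
  simp [monomialTerm, coeff_monomial]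

theorem monomialTerm_mem {S : Set ℕ} {hS : S + H ⊆ S} {J : Ideal (ssr k H)}
    (hJ : ∀ n (hn : n ∈ H), n ∈ S → tp k H n hn ∈ J) {f : ssr k H}
    (hf : f ∈ monomialIdeal k H S hS) (n : ℕ) : monomialTerm k H f n ∈ J := by
  by_cases h0 : coeff n (f : PowerSeries k) = 0
  · convert J.zero_mem
    exact Subtype.ext (by simp [monomialTerm, h0])
  have hnH : n ∈ H := by_contra fun h => h0 (f.2 n h)
  have hnS : n ∈ S := by_contra fun h => h0 (hf n h)
  convert J.mul_mem_left (algebraMap k (ssr k H) (coeff n (f : PowerSeries k))) (hJ n hnH hnS)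
  exact Subtype.ext (by simp [monomialTerm, coe_tp, PowerSeries.monomial_eq_C_mul_X_pow])

theorem monomialIdeal_le_of_tp_mem {c : ℕ} (hc : ∀ n, c ≤ n → n ∈ H) {S : Set ℕ}
    {hS : S + H ⊆ S} {J : Ideal (ssr k H)} (hJ : ∀ n (hn : n ∈ H), n ∈ S → tp k H n hn ∈ J) :
    monomialIdeal k H S hS ≤ J := by
  intro f hf
  rcases S.eq_empty_or_nonempty with rfl | ⟨e, heS⟩
  · convert J.zero_mem
    exact Subtype.ext (PowerSeries.ext fun n => hf n (Set.notMem_empty n))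
  have hecH : e + c ∈ H := hc _ (Nat.le_add_left c e)
  have hecS : e + c ∈ S := hS ⟨e, heS, c, hc c le_rfl, rfl⟩
  let p := ∑ n ∈ Finset.range (e + c + c), monomialTerm k H f n
  have hp : p ∈ J := J.sum_mem fun n _ => monomialTerm_mem hJ hf n
  -- `f - p` has no terms below degree `e + 2c`, and `[c, ∞) ⊆ H`
  have htail : tp k H (e + c) hecH ∣ f - p := by
    refine tp_dvd_of_coeff_ne_zero hecH fun n hn => ?_
    have hnN : e + c + c ≤ n := by
      by_contra h
      rw [Subalgebra.coe_sub, map_sub, coeff_sum_monomialTerm, if_pos (by omega), sub_self] at hn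
      exact hn rfl
    exact mem_singleton_add.mpr ⟨n - (e + c), hc _ (by omega), by omega⟩
  simpa using J.add_mem (J.mem_of_dvd htail (hJ _ hecH hecS)) hp

-- Starting from `H` rather than `{0}` makes every `maxPowExps H j` stable under adding `H`;
-- from `j = 1` on the two agree, since a nonzero element plus an element of `H` is nonzero.
variable (H) in
def maxPowExps : ℕ → Set ℕ
  | 0 => H
  | j + 1 => maxPowExps j + {u | u ∈ H ∧ u ≠ 0}

theorem maxPowExps_add_subset : ∀ j, maxPowExps H j + H ⊆ maxPowExps H j
  | 0 => (AddSubmonoid.coe_add_self_eq H).subset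
  | j + 1 => by
    rintro _ ⟨_, ⟨e, he, u, ⟨huH, hu0⟩, rfl⟩, h, hh, rfl⟩
    exact ⟨e, he, u + h, ⟨H.add_mem huH hh, by omega⟩, (add_assoc e u h).symm⟩

theorem maxPowExps_subset : ∀ j, maxPowExps H j ⊆ H
  | 0 => le_rfl
  | j + 1 => by
    rintro _ ⟨e, he, u, ⟨huH, -⟩, rfl⟩
    exact H.add_mem (maxPowExps_subset j he) huH

theorem mul_le_of_mem_maxPowExps {a : ℕ} (hamin : ∀ n ∈ H, n ≠ 0 → a ≤ n) :
    ∀ {j n}, n ∈ maxPowExps H j → a * j ≤ n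
  | 0, _, _ => by simp
  | j + 1, _, ⟨e, he, u, ⟨huH, hu0⟩, rfl⟩ => by
    rw [mul_add_one]
    exact Nat.add_le_add (mul_le_of_mem_maxPowExps hamin he) (hamin u huH hu0)

theorem tp_mem_mIdeal_pow : ∀ {j n}, n ∈ maxPowExps H j → ∀ hnH : n ∈ H,
    tp k H n hnH ∈ mIdeal k H ^ j
  | 0, _, _, _ => by simp
  | j + 1, _, ⟨e, he, u, ⟨huH, hu0⟩, rfl⟩, _ => by
    rw [← tp_mul e u (maxPowExps_subset j he) huH, pow_succ]
    exact Ideal.mul_mem_mul (tp_mem_mIdeal_pow he _)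
      (Ideal.subset_span ⟨u, huH, Nat.pos_of_ne_zero hu0, rfl⟩)

theorem mIdeal_pow_le : ∀ j,
    mIdeal k H ^ j ≤ monomialIdeal k H (maxPowExps H j) (maxPowExps_add_subset j)
  | 0 => by
    rw [pow_zero, Ideal.one_eq_top, top_le_iff, eq_top_iff]
    exact fun f _ => f.2
  | j + 1 => by
    have hm : mIdeal k H ≤ monomialIdeal k H {u | u ∈ H ∧ u ≠ 0} (by
        rintro _ ⟨u, ⟨huH, hu0⟩, h, hh, rfl⟩
        exact ⟨H.add_mem huH hh, by simp [hu0]⟩) :=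
      Ideal.span_le.mpr fun _ ⟨n, hn, hn0, hx⟩ =>
        hx ▸ tp_mem_monomialIdeal_iff.mpr ⟨hn, hn0.ne'⟩
    rw [pow_succ]
    exact (Ideal.mul_mono (mIdeal_pow_le j) hm).trans (monomialIdeal_mul_le subset_rfl)

theorem tp_mem_mIdeal_pow_iff {j n : ℕ} (hn : n ∈ H) :
    tp k H n hn ∈ mIdeal k H ^ j ↔ n ∈ maxPowExps H j :=
  ⟨fun h => tp_mem_monomialIdeal_iff.mp (mIdeal_pow_le j h), fun h => tp_mem_mIdeal_pow h hn⟩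

variable (H) in
def colonExps (A B : Set ℕ) : Set ℕ := {n | n ∈ H ∧ ∀ m ∈ B, n + m ∈ A}

theorem colonExps_add_subset {A B : Set ℕ} (hA : A + H ⊆ A) :
    colonExps H A B + H ⊆ colonExps H A B := by
  rintro _ ⟨n, ⟨hnH, hn⟩, h, hh, rfl⟩
  refine ⟨H.add_mem hnH hh, fun m hm => ?_⟩
  rw [add_right_comm]
  exact hA ⟨n + m, hn m hm, h, hh, rfl⟩

theorem colon_eq_monomialIdeal {A B : Set ℕ} {hA : A + H ⊆ A} {J : Ideal (ssr k H)}
    {hB : B + H ⊆ B} (hBH : B ⊆ H) (hJB : J ≤ monomialIdeal k H B hB)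
    (hBJ : ∀ m (hm : m ∈ H), m ∈ B → tp k H m hm ∈ J) :
    (monomialIdeal k H A hA).colon (J : Set (ssr k H)) =
      monomialIdeal k H (colonExps H A B) (colonExps_add_subset hA) := by
  ext f
  rw [Submodule.mem_colon]
  constructor
  · intro hf n hn
    by_contra h0
    refine hn ⟨by_contra fun h => h0 (f.2 n h), fun m hm => ?_⟩
    have hfm := hf _ (hBJ m (hBH hm) hm)
    by_contra hnm
    apply h0
    simpa [coe_tp, coeff_mul_X_pow] using hfm (n + m) hnm
  · intro hf g hg
    exact monomialIdeal_mul_le (by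
      rintro _ ⟨n, ⟨-, hn⟩, m, hm, rfl⟩
      exact hn m hm) (Ideal.mul_mem_mul hf (hJB hg))

theorem exists_mem_add_eq_of_notMem {c : ℕ} (hc : ∀ n, c ≤ n → n ∈ H)
    (hsym : ∀ n, n ≤ c - 1 → (n ∈ H ↔ c - 1 - n ∉ H)) {z : ℕ} (hz : z ∉ H) :
    ∃ w ∈ H, z + w = c - 1 := by
  have hzc : z ≤ c - 1 := by_contra fun h => hz (hc z (by omega))
  exact ⟨c - 1 - z, by_contra fun h => hz ((hsym z hzc).mpr h), by omega⟩

section Combinatorics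

variable {a F p s : ℕ}

variable (H) in
def dualSet (j : ℕ) : Set ℕ := {z | ∀ m ∈ maxPowExps H j, z + m ∈ H}

theorem zero_mem_dualSet (j : ℕ) : 0 ∈ dualSet H j := fun m hm => by
  simpa using maxPowExps_subset j hm

variable (H) in
def quasiSocleExps (s j : ℕ) : Set ℕ := colonExps H ({s} + H) (maxPowExps H j)

theorem mem_quasiSocleExps_iff {j : ℕ} (hF : F ∉ H) (hFj : ∀ n, F < n → n ∈ maxPowExps H j)
    {x : ℕ} : x ∈ quasiSocleExps H s j ↔ x ∈ H ∧ ∃ z ∈ dualSet H j, x = s + z := by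
  constructor
  · rintro ⟨hxH, hx⟩
    have hsx : s ≤ x := by
      by_contra hxs
      obtain ⟨_, hs, h, hh, hxh⟩ := Set.mem_add.mp (hx (F + s - x) (hFj _ (by omega)))
      rw [Set.mem_singleton_iff.mp hs] at hxh
      exact hF (by rwa [show h = F by omega] at hh)
    refine ⟨hxH, x - s, fun m hm => ?_, by omega⟩
    obtain ⟨_, hs, h, hh, hxh⟩ := Set.mem_add.mp (hx m hm)
    rw [Set.mem_singleton_iff.mp hs] at hxh
    rwa [show x - s + m = h by omega]
  · rintro ⟨hxH, z, hz, rfl⟩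
    refine ⟨hxH, fun m hm => ?_⟩
    rw [add_assoc]
    exact Set.add_mem_add rfl (hz m hm)

variable (hamin : ∀ n ∈ H, n ≠ 0 → a ≤ n) (hF : F ∉ H) (hsymm : ∀ z ∉ H, ∃ w ∈ H, z + w = F)
  (hC1 : ∀ n, F < n → n ∈ maxPowExps H (p + 1))
  (hC2 : ∀ n ∈ H, a * p ≤ n → n ∈ maxPowExps H p)

include hamin hF hsymm hC2 in
theorem add_mem_dualSet {α β : ℕ} (hα : α ∈ dualSet H (p + 1)) (hβ : β ∈ dualSet H (p + 1)) :
    α + β ∈ dualSet H (p + 1) := by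
  intro m hm
  obtain ⟨e, he, u, ⟨huH, hu0⟩, rfl⟩ := Set.mem_add.mp hm
  have notMem : ∀ n, n = F → n ∉ H := fun n hn => hn ▸ hF
  by_contra hno
  obtain ⟨w, hw, hwF⟩ := hsymm _ hno
  have hew : e + w ∈ maxPowExps H p := maxPowExps_add_subset p (Set.add_mem_add he hw)
  have hβew : β + (e + w) ∉ H := fun h => by
    have hlb := mul_le_of_mem_maxPowExps hamin he
    exact notMem _ (by omega) (hα _ (Set.add_mem_add (hC2 _ h (by omega)) ⟨huH, hu0⟩))
  obtain ⟨w', hw', hw'F⟩ := hsymm _ hβew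
  have hαu : α + u ∈ H := by rwa [show α + u = w' by omega]
  exact notMem _ (by omega) (hβ _ (Set.add_mem_add hew ⟨hαu, by omega⟩))

include hF hsymm hC2 in
theorem add_eq_of_add_notMem (hsa : a * p ≤ s) {δ ε : ℕ} (hε : ε ∈ dualSet H (p + 1))
    (hδ : s + δ ∈ H) (hδε : s + (δ + ε) ∉ H) : s + (δ + ε) = F := by
  obtain ⟨w, hw, hwF⟩ := hsymm _ hδε
  obtain rfl | hw0 := Nat.eq_zero_or_pos w
  · exact hwF
  · have := hε _ (Set.add_mem_add (hC2 _ hδ (by omega)) ⟨hw, hw0.ne'⟩)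
    exact (hF (by rwa [show ε + (s + δ + w) = F by omega] at this)).elim

include hamin hF hsymm hC1 hC2 in
theorem mem_quasiSocleExps_of_add_eq {x y h : ℕ} (hx : x ∈ quasiSocleExps H s (p + 1))
    (hy : y ∈ quasiSocleExps H s (p + 1)) (hh : h ∈ H) (hxy : x + y = s + h) :
    h ∈ quasiSocleExps H s (p + 1) := by
  obtain ⟨-, α, hα, rfl⟩ := (mem_quasiSocleExps_iff hF hC1).mp hx
  obtain ⟨-, β, hβ, rfl⟩ := (mem_quasiSocleExps_iff hF hC1).mp hy
  exact (mem_quasiSocleExps_iff hF hC1).mpr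
    ⟨hh, α + β, add_mem_dualSet hamin hF hsymm hC2 hα hβ, by omega⟩

include hamin hF hsymm hC1 hC2 in
theorem exists_add_add_eq (hsH : s ∈ H) (hsa : a * p ≤ s) {x y z : ℕ}
    (hx : x ∈ quasiSocleExps H s (p + 1)) (hy : y ∈ quasiSocleExps H s (p + 1))
    (hz : z ∈ quasiSocleExps H s (p + 1)) :
    ∃ x' ∈ quasiSocleExps H s (p + 1), ∃ y' ∈ quasiSocleExps H s (p + 1),
      x + y + z = s + (x' + y') := by
  have mem_iff : ∀ {x}, x ∈ quasiSocleExps H s (p + 1) ↔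
      x ∈ H ∧ ∃ z ∈ dualSet H (p + 1), x = s + z := mem_quasiSocleExps_iff hF hC1
  have hT {α β : ℕ} (hα : α ∈ dualSet H (p + 1)) (hβ : β ∈ dualSet H (p + 1)) :=
    add_mem_dualSet hamin hF hsymm hC2 hα hβ
  have hF' {δ ε : ℕ} (hε : ε ∈ dualSet H (p + 1)) (hδ : s + δ ∈ H) (hδε : s + (δ + ε) ∉ H) :=
    add_eq_of_add_notMem hF hsymm hC2 hsa hε hδ hδε
  obtain ⟨hxH, α, hα, rfl⟩ := mem_iff.mp hx
  obtain ⟨hyH, β, hβ, rfl⟩ := mem_iff.mp hy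
  obtain ⟨-, γ, hγ, rfl⟩ := mem_iff.mp hz
  by_cases h1 : s + (β + γ) ∈ H
  · exact ⟨_, hx, _, mem_iff.mpr ⟨h1, _, hT hβ hγ, rfl⟩, by ring⟩
  by_cases h2 : s + (α + γ) ∈ H
  · exact ⟨_, hy, _, mem_iff.mpr ⟨h2, _, hT hα hγ, rfl⟩, by ring⟩
  by_cases h3 : s + (α + β) ∈ H
  · exact ⟨_, hz, _, mem_iff.mpr ⟨h3, _, hT hα hβ, rfl⟩, by ring⟩
  -- all three pairwise sums are the Frobenius number, so `α = β = γ` and one takes `x' = s`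
  have e1 := hF' hγ hyH h1
  have e2 := hF' hγ hxH h2
  have e3 := hF' hβ hxH h3
  have hα0 : α ≠ 0 := by
    rintro rfl
    exact hF (by rwa [show F = s by omega])
  have h3α : s + (α + (α + α)) ∈ H := maxPowExps_subset _ (hC1 _ (by omega))
  exact ⟨s, mem_iff.mpr ⟨hsH, 0, zero_mem_dualSet _, rfl⟩, _,
    mem_iff.mpr ⟨h3α, _, hT hα (hT hα hα), rfl⟩, by omega⟩

end Combinatorics

theorem pow_three_le_span_mul_sq {c s : ℕ} (hc : ∀ n, c ≤ n → n ∈ H) (hs : s ∈ H) {S : Set ℕ}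
    {hS : S + H ⊆ S} (hSH : S ⊆ H)
    (hred : ∀ x ∈ S, ∀ y ∈ S, ∀ z ∈ S, ∃ x' ∈ S, ∃ y' ∈ S, x + y + z = s + (x' + y')) :
    monomialIdeal k H S hS ^ 3 ≤ Ideal.span {tp k H s hs} * monomialIdeal k H S hS ^ 2 := by
  have hI3 : monomialIdeal k H S hS ^ 3 ≤
      monomialIdeal k H (S + S + S) (add_add_subset hS) := by
    rw [pow_succ, sq]
    exact Ideal.mul_mono_left (monomialIdeal_mul_le (hU := add_add_subset hS) subset_rfl)
      |>.trans (monomialIdeal_mul_le subset_rfl)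
  refine hI3.trans (monomialIdeal_le_of_tp_mem hc ?_)
  intro n hn hnS
  obtain ⟨_, hxy, z, hz, rfl⟩ := Set.mem_add.mp hnS
  obtain ⟨x, hx, y, hy, rfl⟩ := Set.mem_add.mp hxy
  obtain ⟨x', hx', y', hy', hxyz⟩ := hred x hx y hy z hz
  have hx'y' : x' + y' ∈ H := H.add_mem (hSH hx') (hSH hy')
  rw [tp_congr hn (H.add_mem hs hx'y') hxyz, ← tp_mul s _ hs hx'y',
    ← tp_mul x' y' (hSH hx') (hSH hy'), sq]
  exact Ideal.mul_mem_mul (Ideal.mem_span_singleton_self _) (Ideal.mul_mem_mul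
    (tp_mem_monomialIdeal_iff.mpr hx') (tp_mem_monomialIdeal_iff.mpr hy'))

theorem span_inf_sq_le_span_mul {c s : ℕ} (hc : ∀ n, c ≤ n → n ∈ H) (hs : s ∈ H) {S : Set ℕ}
    {hS : S + H ⊆ S} (hred : ∀ x ∈ S, ∀ y ∈ S, ∀ h ∈ H, x + y = s + h → h ∈ S) :
    Ideal.span {tp k H s hs} ⊓ monomialIdeal k H S hS ^ 2 ≤
      Ideal.span {tp k H s hs} * monomialIdeal k H S hS := by
  have hQI2 : Ideal.span {tp k H s hs} ⊓ monomialIdeal k H S hS ^ 2 ≤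
      monomialIdeal k H (({s} + H) ∩ (S + S))
        (Set.inter_add_subset.trans (Set.inter_subset_inter (singleton_add_subset s)
          (add_add_subset hS))) := by
    rw [span_tp_eq_monomialIdeal, sq]
    exact inf_le_inf_left _ (monomialIdeal_mul_le (hU := add_add_subset hS) subset_rfl)
      |>.trans (inf_monomialIdeal_le subset_rfl)
  refine hQI2.trans (monomialIdeal_le_of_tp_mem hc ?_)
  rintro _ hn ⟨hsh, hxy⟩
  obtain ⟨h, hh, rfl⟩ := mem_singleton_add.mp hsh
  obtain ⟨x, hx, y, hy, hxy⟩ := Set.mem_add.mp hxy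
  rw [← tp_mul s h hs hh]
  exact Ideal.mul_mem_mul (Ideal.mem_span_singleton_self _)
    (tp_mem_monomialIdeal_iff.mpr (hred x hx y hy h hh hxy))

end QuasiSocle

open QuasiSocle in
theorem stmt11_general (k : Type) [Field k] (H : AddSubmonoid ℕ)
    (a : ℕ) (hamin : ∀ n ∈ H, n ≠ 0 → a ≤ n)
    (c : ℕ) (hc : ∀ n : ℕ, c ≤ n → n ∈ H)
    (hsym : ∀ n : ℕ, n ≤ c - 1 → (n ∈ H ↔ (c - 1 - n) ∉ H))
    (q : ℕ) (hq : 0 < q)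
    (hC1 : ∀ n : ℕ, ∀ hn : c ≤ n, tp k H n (hc n hn) ∈ mIdeal k H ^ q)
    (hC2 : ∀ (n : ℕ) (hn : n ∈ H), tp k H n hn ∉ mIdeal k H ^ (q - 1) → n < a * (q - 1))
    (s : ℕ) (hs : s ∈ H)
    (Q : Ideal (ssr k H)) (hQ : Q = Ideal.span {tp k H s hs})
    (I : Ideal (ssr k H)) (hI : I = Submodule.colon Q ((mIdeal k H ^ q : Ideal (ssr k H)) : Set (ssr k H)))
    (hsaq : a * (q - 1) ≤ s) :
    I ^ 3 = Q * I ^ 2 ∧ ∀ n : ℕ, Q ⊓ I ^ (n + 1) = Q * I ^ n := by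
  obtain ⟨p, rfl⟩ : ∃ p, q = p + 1 := ⟨q - 1, by omega⟩
  rw [Nat.add_sub_cancel] at hC2 hsaq
  have hF : c - 1 ∉ H := fun h => (hsym _ le_rfl).mp h (by simp)
  have hsymm : ∀ z ∉ H, ∃ w ∈ H, z + w = c - 1 := fun _ => exists_mem_add_eq_of_notMem hc hsym
  have hC1' : ∀ n, c - 1 < n → n ∈ maxPowExps H (p + 1) := fun n hn =>
    (tp_mem_mIdeal_pow_iff _).mp (hC1 n (by omega))
  have hC2' : ∀ n ∈ H, a * p ≤ n → n ∈ maxPowExps H p := fun n hn hpn =>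
    (tp_mem_mIdeal_pow_iff hn).mp (by_contra fun h => (hC2 n hn h).not_ge hpn)
  have hI' : I = monomialIdeal k H (quasiSocleExps H s (p + 1))
      (colonExps_add_subset (singleton_add_subset s)) := by
    rw [hI, hQ, span_tp_eq_monomialIdeal, colon_eq_monomialIdeal (maxPowExps_subset _)
      (mIdeal_pow_le _) fun m hm hmE => tp_mem_mIdeal_pow hmE hm]
    rfl
  have hQI : Q ≤ I := hI ▸ Ideal.le_colon
  have h3 : I ^ 3 ≤ Q * I ^ 2 := by
    rw [hQ, hI']
    exact pow_three_le_span_mul_sq hc hs (fun _ hx => hx.1) fun x hx y hy z hz =>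
      exists_add_add_eq hamin hF hsymm hC1' hC2' hs hsaq hx hy hz
  have h2 : Q ⊓ I ^ 2 ≤ Q * I := by
    rw [hQ, hI']
    exact span_inf_sq_le_span_mul hc hs fun x hx y hy h hh hxy =>
      mem_quasiSocleExps_of_add_eq hamin hF hsymm hC1' hC2' hx hy hh hxy
  have h3' : I ^ 3 = Q * I ^ 2 :=
    h3.antisymm (by rw [pow_succ' I 2]; exact Ideal.mul_mono_left hQI)
  exact ⟨h3', Ideal.inf_pow_succ_eq_mul_pow hQI h3' <|
    h2.antisymm (le_inf Ideal.mul_le_left (by rw [sq]; exact Ideal.mul_mono_left hQI))⟩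

/-- Theorem 2.1 (3): under (C1) and (C2), if `s ≥ a(q-1)` then `I³ = QI²` and
`Q ∩ I^{n+1} = QI^n` for all `n`, so the associated graded ring `G(I)` is Cohen-Macaulay. -/
theorem stmt11 (k : Type) [Field k] (H : AddSubmonoid ℕ) (hfin : (Set.univ \ (H : Set ℕ)).Finite)
    (a : ℕ) (haH : a ∈ H) (ha0 : a ≠ 0) (hamin : ∀ n ∈ H, n ≠ 0 → a ≤ n)
    (c : ℕ) (hc : ∀ n : ℕ, c ≤ n → n ∈ H) (hcmin : ∀ m : ℕ, (∀ n : ℕ, m ≤ n → n ∈ H) → c ≤ m)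
    (hsym : ∀ n : ℕ, n ≤ c - 1 → (n ∈ H ↔ (c - 1 - n) ∉ H))
    (q : ℕ) (hq : 0 < q)
    (hC1 : ∀ n : ℕ, ∀ hn : c ≤ n, tp k H n (hc n hn) ∈ mIdeal k H ^ q)
    (hC2 : ∀ (n : ℕ) (hn : n ∈ H), tp k H n hn ∉ mIdeal k H ^ (q - 1) → n < a * (q - 1))
    (s : ℕ) (hs : s ∈ H) (hs0 : 0 < s)
    (Q : Ideal (ssr k H)) (hQ : Q = Ideal.span {tp k H s hs})
    (I : Ideal (ssr k H)) (hI : I = Submodule.colon Q ((mIdeal k H ^ q : Ideal (ssr k H)) : Set (ssr k H)))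
    (hsaq : a * (q - 1) ≤ s) :
    I ^ 3 = Q * I ^ 2 ∧ ∀ n : ℕ, Q ⊓ I ^ (n + 1) = Q * I ^ n :=
  stmt11_general k H a hamin c hc hsym q hq hC1 hC2 s hs Q hQ I hI hsaq
end

section
/- Let A = k[[t^a, t^{a+1}]] with a ≥ 2, q < a a positive integer, 0 < s ∈ H = ⟨a, a+1⟩ with s ≥ aq, Q = (t^s), I = Q : 𝔪^q. Then I² = QI. -/
/-!
Since `𝔪^q = (t^(qa), t^(qa+1), …, t^(qa+q))`, the ideal `I` is spanned by the monomials `t^n`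
for which `n + qa - s` starts a run of `q + 1` consecutive elements of `H`. When `q < a`, a run
start is either `qa + h` with `h ∈ H` or lies beyond the conductor `(a - 1)a`; so run starts are
closed under `(m₁, m₂) ↦ m₁ + m₂ - qa`, and adding `s - qa` to one lands in `H`. Thus every
exponent `i + j` of `I·I` has `i + j - s` in `H` and again an exponent of `I`, i.e. `I² ⊆ QI`.
-/

set_option maxHeartbeats 1000000
set_option synthInstance.maxHeartbeats 1000000

open PowerSeries

def IsRun (H : AddSubmonoid ℕ) (q m : ℕ) : Prop := ∀ j ≤ q, m + j ∈ H

/-- The exponents `n` with `t^n ∈ (t^s) : (t^b, t^(b+1), …, t^(b+q))`. -/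
def colonExponents (H : AddSubmonoid ℕ) (q b s : ℕ) : Set ℕ :=
  {n | s ≤ n + b ∧ IsRun H q (n + b - s)}

section Runs

variable {H : AddSubmonoid ℕ} {a q : ℕ}

theorem mul_add_mem (haH : a ∈ H) (ha1H : a + 1 ∈ H) {j : ℕ} (hj : j ≤ q) : q * a + j ∈ H := by
  obtain ⟨d, rfl⟩ : ∃ d, q = j + d := ⟨q - j, by omega⟩
  have hsplit : (j + d) * a + j = d • a + j • (a + 1) := by simp only [smul_eq_mul]; ring
  rw [hsplit]
  exact add_mem (nsmul_mem haH d) (nsmul_mem ha1H j)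

theorem IsRun.add_mem {m h : ℕ} (hm : IsRun H q m) (hh : h ∈ H) : IsRun H q (m + h) :=
  fun j hj => by rw [add_right_comm]; exact AddSubmonoid.add_mem _ (hm j hj) hh

end Runs

section PairSemigroup

variable {a q : ℕ}

theorem mem_closure_pair_iff {n : ℕ} :
    n ∈ AddSubmonoid.closure ({a, a + 1} : Set ℕ) ↔ ∃ i, i * a ≤ n ∧ n ≤ i * a + i := by
  constructor
  · intro hn
    induction hn using AddSubmonoid.closure_induction with
    | mem x hx =>
      rcases hx with rfl | rfl <;> exact ⟨1, by omega⟩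
    | zero => exact ⟨0, by omega⟩
    | add x y _ _ hx hy =>
      obtain ⟨i, hi⟩ := hx
      obtain ⟨j, hj⟩ := hy
      exact ⟨i + j, by rw [add_mul]; omega⟩
  · rintro ⟨i, hi⟩
    obtain ⟨r, hr, rfl⟩ : ∃ r ≤ i, n = i * a + r := ⟨n - i * a, by omega, by omega⟩
    exact mul_add_mem (AddSubmonoid.subset_closure (by simp))
      (AddSubmonoid.subset_closure (by simp)) hr

theorem mem_closure_pair_of_le (ha : 1 ≤ a) {n : ℕ} (h : (a - 1) * a ≤ n) :
    n ∈ AddSubmonoid.closure ({a, a + 1} : Set ℕ) := by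
  have hmod : n % a < a := Nat.mod_lt _ (by omega)
  have hdiv : a - 1 ≤ n / a := (Nat.le_div_iff_mul_le (by omega)).mpr h
  have hmod_le : n % a ≤ n / a := by omega
  exact mem_closure_pair_iff.mpr
    ⟨n / a, Nat.div_mul_le_self n a, by linarith [Nat.div_add_mod' n a]⟩

theorem isRun_of_le (ha : 1 ≤ a) {m : ℕ} (h : (a - 1) * a ≤ m) :
    IsRun (AddSubmonoid.closure {a, a + 1}) q m :=
  fun _ _ => mem_closure_pair_of_le ha (by omega)

/-- Below the conductor `(a - 1) * a` the semigroup is a union of blocks `[i * a, i * a + i]`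
separated by gaps, so a run of `q + 1 ≤ a` consecutive elements fits in one block. -/
theorem IsRun.exists_eq_mul_add_or_le (ha : 2 ≤ a) (hqa : q < a) {m : ℕ}
    (hm : IsRun (AddSubmonoid.closure {a, a + 1}) q m) :
    (∃ h ∈ AddSubmonoid.closure ({a, a + 1} : Set ℕ), m = q * a + h) ∨ (a - 1) * a ≤ m := by
  refine or_iff_not_imp_right.mpr fun hlt => ?_
  obtain ⟨i, hi⟩ := mem_closure_pair_iff.mp (by simpa using hm 0 (Nat.zero_le q))
  obtain ⟨r, hr, rfl⟩ : ∃ r ≤ i, m = i * a + r := ⟨m - i * a, by omega, by omega⟩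
  by_cases hblock : r + q ≤ i
  · obtain ⟨d, rfl⟩ : ∃ d, i = q + d := ⟨i - q, by omega⟩
    refine ⟨d * a + r, mem_closure_pair_iff.mpr ⟨d, by omega⟩, by rw [add_mul]; omega⟩
  exfalso
  have hia : i + 1 < a := by
    by_contra! hai
    exact hlt (by nlinarith [Nat.mul_le_mul_right a (show a - 1 ≤ i by omega)])
  have hgap := hm (i - r + 1) (by omega)
  rw [show i * a + r + (i - r + 1) = i * a + i + 1 by omega] at hgap
  obtain ⟨i', hi'⟩ := mem_closure_pair_iff.mp hgap
  rcases le_or_gt i' i with hle | hlt'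
  · linarith [Nat.mul_le_mul_right a hle]
  · linarith [Nat.mul_le_mul_right a (Nat.succ_le_of_lt hlt'), add_one_mul i a]

theorem IsRun.mul_le (ha : 2 ≤ a) (hqa : q < a) {m : ℕ}
    (hm : IsRun (AddSubmonoid.closure {a, a + 1}) q m) : q * a ≤ m := by
  rcases hm.exists_eq_mul_add_or_le ha hqa with ⟨h, -, rfl⟩ | hle
  · omega
  · exact (Nat.mul_le_mul_right a (by omega)).trans hle

theorem IsRun.add_sub (ha : 2 ≤ a) (hqa : q < a) {m₁ m₂ : ℕ}
    (h₁ : IsRun (AddSubmonoid.closure {a, a + 1}) q m₁)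
    (h₂ : IsRun (AddSubmonoid.closure {a, a + 1}) q m₂) :
    IsRun (AddSubmonoid.closure {a, a + 1}) q (m₁ + m₂ - q * a) := by
  have hq₂ := h₂.mul_le ha hqa
  rcases h₁.exists_eq_mul_add_or_le ha hqa with ⟨h, hh, rfl⟩ | hle
  · rw [show q * a + h + m₂ - q * a = m₂ + h by omega]
    exact h₂.add_mem hh
  · exact isRun_of_le (by omega) (by omega)

theorem IsRun.add_sub_mem (ha : 2 ≤ a) (hqa : q < a) {m t : ℕ}
    (hm : IsRun (AddSubmonoid.closure {a, a + 1}) q m)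
    (ht : t ∈ AddSubmonoid.closure ({a, a + 1} : Set ℕ)) (htq : q * a ≤ t) :
    m + t - q * a ∈ AddSubmonoid.closure ({a, a + 1} : Set ℕ) := by
  rcases hm.exists_eq_mul_add_or_le ha hqa with ⟨h, hh, rfl⟩ | hle
  · rw [show q * a + h + t - q * a = h + t by omega]
    exact AddSubmonoid.add_mem _ hh ht
  · exact mem_closure_pair_of_le (by omega) (by omega)

theorem add_sub_mem_colonExponents (ha : 2 ≤ a) (hqa : q < a) {s : ℕ}
    (hs : s ∈ AddSubmonoid.closure ({a, a + 1} : Set ℕ)) (hsq : q * a ≤ s) {i j : ℕ}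
    (hi : i ∈ colonExponents (AddSubmonoid.closure {a, a + 1}) q (q * a) s)
    (hj : j ∈ colonExponents (AddSubmonoid.closure {a, a + 1}) q (q * a) s) :
    s ≤ i + j ∧ i + j - s ∈ AddSubmonoid.closure ({a, a + 1} : Set ℕ) ∧
      i + j - s ∈ colonExponents (AddSubmonoid.closure {a, a + 1}) q (q * a) s := by
  obtain ⟨hsi, hri⟩ := hi
  obtain ⟨hsj, hrj⟩ := hj
  have hqi := hri.mul_le ha hqa
  have hqj := hrj.mul_le ha hqa
  have hsum := (hri.add_sub ha hqa hrj).add_sub_mem ha hqa hs hsq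
  refine ⟨by omega, by convert hsum using 1; omega, by omega, ?_⟩
  convert hri.add_sub ha hqa hrj using 1
  omega

end PairSemigroup

section Monomials

variable {k : Type} [Field k] {H : AddSubmonoid ℕ}

theorem PowerSeries.exists_add_eq_of_coeff_mul_ne_zero {f g : PowerSeries k} {n : ℕ}
    (h : coeff n (f * g) ≠ 0) : ∃ i j, i + j = n ∧ coeff i f ≠ 0 ∧ coeff j g ≠ 0 := by
  rw [coeff_mul] at h
  obtain ⟨⟨i, j⟩, hij, hne⟩ := Finset.exists_ne_zero_of_sum_ne_zero h
  exact ⟨i, j, Finset.HasAntidiagonal.mem_antidiagonal.mp hij, left_ne_zero_of_mul hne,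
    right_ne_zero_of_mul hne⟩

theorem ssr_mem_of_coeff_ne_zero (f : ssr k H) {n : ℕ} (h : coeff n (f : PowerSeries k) ≠ 0) :
    n ∈ H :=
  not_not.mp fun hn => h (f.2 n hn)

theorem coeff_mul_of_coe_eq_X_pow {x : ssr k H} {b : ℕ} (hx : (x : PowerSeries k) = X ^ b)
    (f : ssr k H) (n : ℕ) :
    coeff n ((x * f : ssr k H) : PowerSeries k) =
      if b ≤ n then coeff (n - b) (f : PowerSeries k) else 0 := by
  rw [Subalgebra.coe_mul, hx, coeff_X_pow_mul']

theorem mem_span_tp_iff {s : ℕ} (hs : s ∈ H) (f : ssr k H) :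
    f ∈ Ideal.span {tp k H s hs} ↔
      ∀ n, coeff n (f : PowerSeries k) ≠ 0 → s ≤ n ∧ n - s ∈ H := by
  constructor
  · rintro hf n hn
    obtain ⟨g, rfl⟩ := Ideal.mem_span_singleton.mp hf
    rw [coeff_mul_of_coe_eq_X_pow rfl] at hn
    split_ifs at hn with hsn
    · exact ⟨hsn, ssr_mem_of_coeff_ne_zero g hn⟩
    · exact absurd rfl hn
  · intro hf
    refine Ideal.mem_span_singleton.mpr ⟨⟨mk fun n => coeff (n + s) (f : PowerSeries k), ?_⟩, ?_⟩
    · intro n hn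
      rw [coeff_mk]
      by_contra h
      exact hn (Nat.add_sub_cancel n s ▸ (hf _ h).2)
    · ext1; ext1 n
      rw [coeff_mul_of_coe_eq_X_pow rfl]
      split_ifs with hsn
      · simp [Nat.sub_add_cancel hsn]
      · by_contra h
        exact hsn (hf n h).1

theorem mem_colon_monomials_iff {s : ℕ} (hs : s ∈ H) {b q : ℕ} (hb : ∀ j ≤ q, b + j ∈ H)
    (f : ssr k H) :
    f ∈ (Ideal.span {tp k H s hs}).colon {x | ∃ j ≤ q, (x : PowerSeries k) = X ^ (b + j)} ↔
      ∀ n, coeff n (f : PowerSeries k) ≠ 0 → n ∈ colonExponents H q b s := by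
  simp only [Submodule.mem_colon, smul_eq_mul, Set.mem_ofPred_eq, colonExponents, IsRun]
  constructor
  · intro hf n hn
    have hmem : ∀ j ≤ q, s ≤ n + (b + j) ∧ n + (b + j) - s ∈ H := fun j hj => by
      have hmem := hf (tp k H (b + j) (hb j hj)) ⟨j, hj, rfl⟩
      rw [mul_comm, mem_span_tp_iff] at hmem
      refine hmem (n + (b + j)) ?_
      rwa [coeff_mul_of_coe_eq_X_pow rfl, if_pos (Nat.le_add_left _ _), Nat.add_sub_cancel]
    refine ⟨(hmem 0 q.zero_le).1, fun j hj => ?_⟩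
    rw [show n + b - s + j = n + (b + j) - s by have := (hmem 0 q.zero_le).1; omega]
    exact (hmem j hj).2
  · rintro hf x ⟨j, hj, hx⟩
    rw [mul_comm, mem_span_tp_iff]
    intro m hm
    rw [coeff_mul_of_coe_eq_X_pow hx] at hm
    split_ifs at hm with hbm
    · obtain ⟨hsb, hrun⟩ := hf _ hm
      refine ⟨by omega, ?_⟩
      rw [show m - s = m - (b + j) + b - s + j by omega]
      exact hrun j hj
    · exact absurd rfl hm

theorem span_pair_pow {a : ℕ} (haH : a ∈ H) (ha1H : a + 1 ∈ H) (q : ℕ) :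
    Ideal.span {tp k H a haH, tp k H (a + 1) ha1H} ^ q =
      Ideal.span {x : ssr k H | ∃ j ≤ q, (x : PowerSeries k) = X ^ (q * a + j)} := by
  refine le_antisymm ?_ (Ideal.span_le.mpr ?_)
  · induction q with
    | zero =>
      rw [pow_zero, Ideal.one_eq_top, top_le_iff, Ideal.eq_top_iff_one]
      exact Ideal.subset_span ⟨0, le_rfl, by simp⟩
    | succ q ih =>
      rw [pow_succ]
      refine (Ideal.mul_mono_left ih).trans ?_
      rw [Ideal.span_mul_span']
      refine Ideal.span_mono ?_
      rintro _ ⟨x, ⟨j, hj, hx⟩, y, hy, rfl⟩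
      rcases hy with rfl | rfl
      · exact ⟨j, by omega, by simp only [Subalgebra.coe_mul, hx, tp, ← pow_add]; ring_nf⟩
      · exact ⟨j + 1, by omega, by simp only [Subalgebra.coe_mul, hx, tp, ← pow_add]; ring_nf⟩
  · rintro x ⟨j, hj, hx⟩
    obtain ⟨d, rfl⟩ : ∃ d, q = j + d := ⟨q - j, by omega⟩
    have hx' : x = tp k H a haH ^ d * tp k H (a + 1) ha1H ^ j := by
      ext1
      simp only [hx, Subalgebra.coe_mul, SubmonoidClass.coe_pow, tp, ← pow_mul, ← pow_add]
      ring_nf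
    rw [hx', add_comm j, pow_add]
    exact Ideal.mul_mem_mul (Ideal.pow_mem_pow (Ideal.subset_span (by simp)) d)
      (Ideal.pow_mem_pow (Ideal.subset_span (by simp)) j)

end Monomials

theorem stmt13_general (k : Type) [Field k] (a : ℕ) (ha : 2 ≤ a)
    (H : AddSubmonoid ℕ) (hH : H = AddSubmonoid.closure {a, a + 1})
    (haH : a ∈ H) (ha1H : a + 1 ∈ H)
    (q : ℕ) (hqa : q < a)
    (s : ℕ) (hs : s ∈ H) (hsq : a * q ≤ s)
    (𝔪 : Ideal (ssr k H)) (h𝔪 : 𝔪 = Ideal.span {tp k H a haH, tp k H (a + 1) ha1H})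
    (Q : Ideal (ssr k H)) (hQ : Q = Ideal.span {tp k H s hs})
    (I : Ideal (ssr k H)) (hI : I = Submodule.colon Q ((𝔪 ^ q : Ideal (ssr k H)) : Set (ssr k H))) :
    I ^ 2 = Q * I := by
  subst hH
  have mem_I (f : ssr k _) : f ∈ I ↔ ∀ n, coeff n (f : PowerSeries k) ≠ 0 →
      n ∈ colonExponents (AddSubmonoid.closure {a, a + 1}) q (q * a) s := by
    rw [hI, hQ, h𝔪, span_pair_pow, Ideal.colon_span]
    exact mem_colon_monomials_iff hs (fun j hj => mul_add_mem haH ha1H hj) f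
  refine le_antisymm ?_ (sq I ▸ Ideal.mul_mono_left (hI ▸ Ideal.le_colon))
  rw [sq, Ideal.mul_le]
  intro x hx y hy
  have hxy (n : ℕ) (hn : coeff n ((x * y : ssr k _) : PowerSeries k) ≠ 0) : s ≤ n ∧
      n - s ∈ AddSubmonoid.closure ({a, a + 1} : Set ℕ) ∧
      n - s ∈ colonExponents (AddSubmonoid.closure {a, a + 1}) q (q * a) s := by
    obtain ⟨i, j, rfl, hi, hj⟩ := exists_add_eq_of_coeff_mul_ne_zero hn
    exact add_sub_mem_colonExponents ha hqa hs (mul_comm a q ▸ hsq)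
      ((mem_I x).mp hx i hi) ((mem_I y).mp hy j hj)
  obtain ⟨z, hz⟩ := Ideal.mem_span_singleton'.mp
    ((mem_span_tp_iff hs _).mpr fun n hn => ⟨(hxy n hn).1, (hxy n hn).2.1⟩)
  rw [← hz, mul_comm z]
  refine Ideal.mul_mem_mul (hQ ▸ Ideal.subset_span rfl) ((mem_I z).mpr fun n hn => ?_)
  have hcoeff := coeff_mul_of_coe_eq_X_pow (x := tp k _ s hs) rfl z (n + s)
  rw [if_pos (Nat.le_add_left s n), Nat.add_sub_cancel, mul_comm, hz] at hcoeff
  simpa only [Nat.add_sub_cancel] using (hxy (n + s) (hcoeff ▸ hn)).2.2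

/-- Corollary 3.4 (1): if `q < a` and `s ≥ aq` then `I² = QI`. -/
theorem stmt13 (k : Type) [Field k] (a : ℕ) (ha : 2 ≤ a)
    (H : AddSubmonoid ℕ) (hH : H = AddSubmonoid.closure {a, a + 1})
    (haH : a ∈ H) (ha1H : a + 1 ∈ H)
    (q : ℕ) (hq : 0 < q) (hqa : q < a)
    (s : ℕ) (hs : s ∈ H) (hs0 : 0 < s) (hsq : a * q ≤ s)
    (𝔪 : Ideal (ssr k H)) (h𝔪 : 𝔪 = Ideal.span {tp k H a haH, tp k H (a + 1) ha1H})
    (Q : Ideal (ssr k H)) (hQ : Q = Ideal.span {tp k H s hs})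
    (I : Ideal (ssr k H)) (hI : I = Submodule.colon Q ((𝔪 ^ q : Ideal (ssr k H)) : Set (ssr k H))) :
    I ^ 2 = Q * I :=
  stmt13_general k a ha H hH haH ha1H q hqa s hs hsq 𝔪 h𝔪 Q hQ I hI
end

section
/- Let A = k[[t^a, t^{a+1}]] with a ≥ 2, q = a−1, and s = (a+1)ℓ with 1 ≤ ℓ < a−1 (the case r = ℓ). Set Q = (t^s), I = Q : 𝔪^{a−1}. Then for each n ≥ 1, I^n = QI^{n−1} if and only if n − 1 ≥ ⌈(a−1)/(ℓ+1)⌉; consequently the reduction number r_Q(I) = min{n ≥ 0 : I^{n+1} = QI^n} equals ⌈(a−1)/(ℓ+1)⌉. Moreover Q ∩ I^n = QI^{n−1} for all n ≥ 1, so G(I) is Cohen–Macaulay. -/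
/-!
In `k[[H]]` the ideal spanned by finitely many monomials `t^g`, `g ∈ G`, consists of the series
supported on `G + H`; so products, colons and intersections of such ideals are computed on exponent
sets. For `H = ⟨a, a+1⟩`, whose gaps are the `qa + r` with `q < r < a`, this gives
`I = Q + 𝔪^(ℓ+1)`, hence `I^(n+1) = Q I^n + 𝔪^((ℓ+1)(n+1))`. If `a ≤ (ℓ+1)n + 1`, every generator
of `𝔪^((ℓ+1)(n+1))` already lies in `Q 𝔪^((ℓ+1)n)`; otherwise `t^((ℓ+1)(n+1)a + ℓ-1)` does not lie
in `Q I^n`, because all its cofactors are gaps. Likewise `Q ∩ 𝔪^((ℓ+1)(n+1)) ⊆ Q 𝔪^((ℓ+1)n)`, and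
modularity of the ideal lattice turns this into `Q ∩ I^(n+1) = Q I^n`.
-/

set_option maxHeartbeats 1000000
set_option synthInstance.maxHeartbeats 1000000

open PowerSeries

open Pointwise

namespace ssr

variable {k : Type} [Field k] {H : AddSubmonoid ℕ}

variable (k H) in
noncomputable def monomialIdeal (G : Set ℕ) : Ideal (ssr k H) :=
  Ideal.span {x | ∃ g ∈ G, (x : k⟦X⟧) = X ^ g}

lemma coe_tp_eq (g : ℕ) (hg : g ∈ H) : (tp k H g hg : k⟦X⟧) = X ^ g := rfl

lemma tp_mem_monomialIdeal {G : Set ℕ} {g : ℕ} (hg : g ∈ G) (hgH : g ∈ H) :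
    tp k H g hgH ∈ monomialIdeal k H G :=
  Ideal.subset_span ⟨g, hg, rfl⟩

lemma monomialIdeal_mono {G G' : Set ℕ} (h : G ⊆ G') :
    monomialIdeal k H G ≤ monomialIdeal k H G' :=
  Ideal.span_mono fun _ ⟨g, hg, hx⟩ => ⟨g, h hg, hx⟩

lemma monomialIdeal_union (G G' : Set ℕ) :
    monomialIdeal k H (G ∪ G') = monomialIdeal k H G ⊔ monomialIdeal k H G' := by
  rw [monomialIdeal, monomialIdeal, monomialIdeal, ← Ideal.span_union]
  congr 1
  ext x
  simp only [Set.mem_union, Set.mem_ofPred_eq, or_and_right, exists_or]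

lemma span_tp_singleton {g : ℕ} (hg : g ∈ H) :
    Ideal.span {tp k H g hg} = monomialIdeal k H {g} := by
  rw [monomialIdeal]
  congr 1
  ext x
  simp only [Set.mem_singleton_iff, exists_eq_left, Subtype.ext_iff]
  rfl

lemma span_tp_pair {g g' : ℕ} (hg : g ∈ H) (hg' : g' ∈ H) :
    Ideal.span {tp k H g hg, tp k H g' hg'} = monomialIdeal k H {g, g'} := by
  rw [Ideal.span_insert, span_tp_singleton, span_tp_singleton, Set.insert_eq,
    monomialIdeal_union]

lemma monomialIdeal_zero : monomialIdeal k H {0} = ⊤ := by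
  rw [← span_tp_singleton H.zero_mem, Ideal.span_singleton_eq_top]
  exact (show tp k H 0 H.zero_mem = 1 from Subtype.ext (pow_zero _)) ▸ isUnit_one

lemma monomialIdeal_add {G G' : Set ℕ} (hG : G ⊆ H) (hG' : G' ⊆ H) :
    monomialIdeal k H (G + G') = monomialIdeal k H G * monomialIdeal k H G' := by
  rw [monomialIdeal, monomialIdeal, monomialIdeal, Ideal.span_mul_span']
  congr 1
  ext z
  constructor
  · rintro ⟨_, ⟨g, hg, g', hg', rfl⟩, hz⟩
    refine ⟨tp k H g (hG hg), ⟨g, hg, rfl⟩, tp k H g' (hG' hg'), ⟨g', hg', rfl⟩, ?_⟩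
    exact Subtype.ext (by rw [hz, pow_add]; rfl)
  · rintro ⟨x, ⟨g, hg, hx⟩, y, ⟨g', hg', hy⟩, rfl⟩
    exact ⟨g + g', Set.add_mem_add hg hg', by
      rw [pow_add, ← hx, ← hy]; rfl⟩

lemma mem_of_coeff_ne_zero (f : ssr k H) {n : ℕ} (hn : coeff n (f : k⟦X⟧) ≠ 0) : n ∈ H := by
  by_contra h
  exact hn (f.2 n h)

lemma mem_add_of_mem_monomialIdeal {G : Set ℕ} {f : ssr k H} (hf : f ∈ monomialIdeal k H G)
    {n : ℕ} (hn : coeff n (f : k⟦X⟧) ≠ 0) : n ∈ G + (H : Set ℕ) := by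
  induction hf using Submodule.span_induction generalizing n with
  | mem x hx =>
    obtain ⟨g, hg, hx⟩ := hx
    rw [hx, coeff_X_pow] at hn
    obtain rfl : n = g := by by_contra h; exact hn (if_neg h)
    exact ⟨n, hg, 0, H.zero_mem, add_zero n⟩
  | zero => simp at hn
  | add x y _ _ ihx ihy =>
    by_cases hx : coeff n (x : k⟦X⟧) = 0
    · exact ihy fun hy => hn (by simp [hx, hy])
    · exact ihx hx
  | smul r x _ ih =>
    rw [smul_eq_mul, Subalgebra.coe_mul, coeff_mul] at hn
    obtain ⟨⟨i, j⟩, hij, hne⟩ := Finset.exists_ne_zero_of_sum_ne_zero hn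
    replace hij : i + j = n := by simpa using hij
    obtain ⟨g, hg, h, hh, rfl⟩ := ih (right_ne_zero_of_mul hne)
    exact ⟨g, hg, h + i, H.add_mem hh (mem_of_coeff_ne_zero r (left_ne_zero_of_mul hne)),
      by rw [← hij]; ring⟩

lemma mem_monomialIdeal_of_support {G : Set ℕ} (hG : G.Finite) (hGH : G ⊆ H) {f : ssr k H}
    (hf : ∀ n, coeff n (f : k⟦X⟧) ≠ 0 → n ∈ G + (H : Set ℕ)) : f ∈ monomialIdeal k H G := by
  classical
  obtain ⟨G, rfl⟩ := hG.exists_finset_coe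
  clear hG
  induction G using Finset.induction_on generalizing f with
  | empty =>
    obtain rfl : f = 0 := Subtype.ext (PowerSeries.ext fun n => by
      by_contra hn
      simpa using hf n hn)
    exact zero_mem _
  | insert g G _ ih =>
    have hgH : g ∈ H := hGH (Finset.mem_insert_self g G)
    -- `f = t^g * u + f'`, where `t^g * u` carries the coefficients of `f` on `g + H`
    let u : ssr k H := ⟨PowerSeries.mk fun m => if m ∈ H then coeff (g + m) (f : k⟦X⟧) else 0,
      fun m hm => by rw [coeff_mk, if_neg hm]⟩
    have hcoeff : ∀ n, coeff n ((f - tp k H g hgH * u : ssr k H) : k⟦X⟧) =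
        if g ≤ n ∧ n - g ∈ H then 0 else coeff n (f : k⟦X⟧) := by
      intro n
      rw [Subalgebra.coe_sub, Subalgebra.coe_mul, map_sub, coe_tp_eq, coeff_X_pow_mul', coeff_mk]
      by_cases h1 : g ≤ n
      · by_cases h2 : n - g ∈ H <;> simp [h1, h2, Nat.add_sub_cancel' h1]
      · simp [h1]
    have hrest : f - tp k H g hgH * u ∈ monomialIdeal k H G := by
      refine ih (fun x hx => hGH (Finset.mem_insert_of_mem hx)) fun n hn => ?_
      rw [hcoeff] at hn
      split_ifs at hn with hgn
      · exact absurd rfl hn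
      obtain ⟨g', hg', h, hh, rfl⟩ := hf n hn
      rcases Finset.mem_insert.1 hg' with rfl | hg'
      · exact absurd ⟨Nat.le_add_right _ _, by simpa using hh⟩ hgn
      · exact ⟨g', hg', h, hh, rfl⟩
    rw [← sub_add_cancel f (tp k H g hgH * u)]
    exact add_mem (monomialIdeal_mono (by simp) hrest)
      (Ideal.mul_mem_right _ _ (tp_mem_monomialIdeal (by simp) hgH))

lemma mem_monomialIdeal_iff {G : Set ℕ} (hG : G.Finite) (hGH : G ⊆ H) {f : ssr k H} :
    f ∈ monomialIdeal k H G ↔ ∀ n, coeff n (f : k⟦X⟧) ≠ 0 → n ∈ G + (H : Set ℕ) :=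
  ⟨fun hf _ => mem_add_of_mem_monomialIdeal hf, mem_monomialIdeal_of_support hG hGH⟩

lemma monomialIdeal_le_iff {G G' : Set ℕ} (hG : G ⊆ H) (hG' : G' ⊆ H) :
    monomialIdeal k H G ≤ monomialIdeal k H G' ↔ G ⊆ G' + (H : Set ℕ) := by
  refine ⟨fun hle g hg => mem_add_of_mem_monomialIdeal (hle (tp_mem_monomialIdeal hg (hG hg)))
    (by simp [coe_tp_eq]), fun hsub => Ideal.span_le.2 ?_⟩
  rintro x ⟨g, hg, hx⟩
  obtain ⟨g', hg', h, hh, rfl⟩ := hsub hg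
  obtain rfl : x = tp k H g' (hG' hg') * tp k H h hh := Subtype.ext (by rw [hx, pow_add]; rfl)
  exact Ideal.mul_mem_right _ _ (tp_mem_monomialIdeal hg' (hG' hg'))

lemma mem_colon_monomialIdeal_iff {G E : Set ℕ} (hG : G.Finite) (hGH : G ⊆ H) (hEH : E ⊆ H)
    {f : ssr k H} : f ∈ (monomialIdeal k H G).colon (monomialIdeal k H E : Set (ssr k H)) ↔
      ∀ n, coeff n (f : k⟦X⟧) ≠ 0 → ∀ e ∈ E, n + e ∈ G + (H : Set ℕ) := by
  rw [show monomialIdeal k H E = Ideal.span _ from rfl, Ideal.colon_span, Submodule.mem_colon]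
  constructor
  · intro hf n hn e he
    refine mem_add_of_mem_monomialIdeal (hf (tp k H e (hEH he)) ⟨e, he, rfl⟩) ?_
    rwa [smul_eq_mul, Subalgebra.coe_mul, coe_tp_eq, coeff_mul_X_pow]
  · rintro hf x ⟨e, he, hx⟩
    refine mem_monomialIdeal_of_support hG hGH fun n hn => ?_
    rw [smul_eq_mul, Subalgebra.coe_mul, hx, coeff_mul_X_pow'] at hn
    split_ifs at hn with hen
    · simpa [Nat.sub_add_cancel hen] using hf _ hn e he
    · exact absurd rfl hn

end ssr

open ssr

lemma Ideal.sup_pow_succ {R : Type*} [CommSemiring R] (I J : Ideal R) (n : ℕ) :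
    (I ⊔ J) ^ (n + 1) = I * (I ⊔ J) ^ n ⊔ J ^ (n + 1) := by
  induction n with
  | zero => simp
  | succ n ih =>
    refine le_antisymm ?_ (sup_le ?_ (Ideal.pow_right_mono le_sup_right _))
    · calc (I ⊔ J) ^ (n + 2)
          = (I ⊔ J) ^ (n + 1) * I ⊔ (I * (I ⊔ J) ^ n ⊔ J ^ (n + 1)) * J := by
            rw [pow_succ, mul_sup, ← ih]
        _ = I * (I ⊔ J) ^ (n + 1) ⊔ (I * ((I ⊔ J) ^ n * J) ⊔ J ^ (n + 2)) := by
            rw [mul_comm ((I ⊔ J) ^ (n + 1)) I, sup_mul, mul_assoc, ← pow_succ J]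
        _ ≤ I * (I ⊔ J) ^ (n + 1) ⊔ J ^ (n + 2) :=
            sup_le le_sup_left (sup_le_sup_right (Ideal.mul_mono_right
              ((Ideal.mul_mono_right le_sup_right).trans (pow_succ (I ⊔ J) n).ge)) _)
    · rw [pow_succ' _ (n + 1)]
      exact Ideal.mul_mono_left le_sup_left

abbrev numSemigroupSucc (a : ℕ) : AddSubmonoid ℕ := AddSubmonoid.closure {a, a + 1}

section NumSemigroupSucc

variable {a : ℕ}

lemma left_mem_numSemigroupSucc : a ∈ numSemigroupSucc a :=
  AddSubmonoid.subset_closure (Set.mem_insert _ _)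

lemma right_mem_numSemigroupSucc : a + 1 ∈ numSemigroupSucc a :=
  AddSubmonoid.subset_closure (Set.mem_insert_of_mem _ rfl)

lemma mul_add_mem_numSemigroupSucc {q r : ℕ} (h : r ≤ q) : q * a + r ∈ numSemigroupSucc a :=
  (AddSubmonoid.mem_closure_pair _ _ _).2 ⟨q - r, r, by
    obtain ⟨d, rfl⟩ := Nat.exists_eq_add_of_le h
    simp only [smul_eq_mul, Nat.add_sub_cancel_left]
    ring⟩

lemma mem_numSemigroupSucc_iff (ha : 0 < a) {n : ℕ} :
    n ∈ numSemigroupSucc a ↔ n % a ≤ n / a := by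
  refine ⟨fun hn => ?_, fun hn => Nat.div_add_mod' n a ▸ mul_add_mem_numSemigroupSucc hn⟩
  obtain ⟨x, y, rfl⟩ := (AddSubmonoid.mem_closure_pair _ _ _).1 hn
  have hy := Nat.div_add_mod y a
  have : x • a + y • (a + 1) = y % a + a * (x + y + y / a) := by
    simp only [smul_eq_mul]; linarith
  rw [this, Nat.add_mul_mod_self_left, Nat.add_mul_div_left _ _ ha, Nat.mod_mod,
    Nat.div_eq_of_lt (Nat.mod_lt y ha)]
  exact (Nat.mod_le y a).trans (by rw [zero_add]; exact le_add_right (Nat.le_add_left y x))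

lemma mul_add_notMem_numSemigroupSucc {q r : ℕ} (hr : r < a) (h : q < r) :
    q * a + r ∉ numSemigroupSucc a := by
  have ha : 0 < a := by omega
  rw [mem_numSemigroupSucc_iff ha, add_comm, Nat.add_mul_mod_self_right,
    Nat.add_mul_div_right _ _ ha, Nat.mod_eq_of_lt hr, Nat.div_eq_of_lt hr]
  omega

lemma mem_numSemigroupSucc_of_le (ha : 0 < a) {n : ℕ} (h : (a - 1) * a ≤ n) :
    n ∈ numSemigroupSucc a := by
  rw [mem_numSemigroupSucc_iff ha]
  have : a - 1 ≤ n / a := (Nat.le_div_iff_mul_le ha).2 h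
  have := Nat.mod_lt n ha
  omega

lemma exists_mul_add_of_mem_numSemigroupSucc (ha : 0 < a) {n : ℕ}
    (hn : n ∈ numSemigroupSucc a) : ∃ q r, r ≤ q ∧ r < a ∧ n = q * a + r :=
  ⟨n / a, n % a, (mem_numSemigroupSucc_iff ha).1 hn, Nat.mod_lt n ha, (Nat.div_add_mod' n a).symm⟩

end NumSemigroupSucc

def pairPowGens (a N : ℕ) : Set ℕ := {x | ∃ J ≤ N, x = N * a + J}

section PairPowGens

variable {a : ℕ}

lemma pairPowGens_zero : pairPowGens a 0 = {0} := by
  ext x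
  simp [pairPowGens]

lemma pairPowGens_add_pair (N : ℕ) : pairPowGens a N + {a, a + 1} = pairPowGens a (N + 1) := by
  ext x
  constructor
  · rintro ⟨_, ⟨J, hJ, rfl⟩, _, rfl | rfl, rfl⟩
    exacts [⟨J, by omega, by ring⟩, ⟨J + 1, by omega, by ring⟩]
  · rintro ⟨J, hJ, rfl⟩
    rcases Nat.lt_or_ge N J with hNJ | hJN
    · obtain rfl : J = N + 1 := by omega
      exact ⟨N * a + N, ⟨N, le_rfl, rfl⟩, a + 1, Or.inr rfl, by ring⟩
    · exact ⟨N * a + J, ⟨J, hJN, rfl⟩, a, Or.inl rfl, by ring⟩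

lemma pairPowGens_subset {H : AddSubmonoid ℕ} (ha : a ∈ H) (ha1 : a + 1 ∈ H) (N : ℕ) :
    pairPowGens a N ⊆ H := by
  rintro _ ⟨J, hJ, rfl⟩
  obtain ⟨d, rfl⟩ := Nat.exists_eq_add_of_le hJ
  have : (J + d) * a + J = d • a + J • (a + 1) := by simp only [smul_eq_mul]; ring
  exact this ▸ H.add_mem (H.nsmul_mem ha d) (H.nsmul_mem ha1 J)

lemma pairPowGens_finite (N : ℕ) : (pairPowGens a N).Finite :=
  ((Set.finite_Iic N).image (N * a + ·)).subset fun _ ⟨J, hJ, hx⟩ => ⟨J, hJ, hx.symm⟩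

lemma mem_pairPowGens_add_of_mul_le (ha : 0 < a) {n N : ℕ} (hn : n ∈ numSemigroupSucc a)
    (hN : N * a ≤ n) : n ∈ pairPowGens a N + (numSemigroupSucc a : Set ℕ) := by
  have hr : n % a ≤ n / a := (mem_numSemigroupSucc_iff ha).1 hn
  have hNq : N ≤ n / a := (Nat.le_div_iff_mul_le ha).2 hN
  obtain ⟨d, hd⟩ := Nat.exists_eq_add_of_le hNq
  rw [← Nat.div_add_mod' n a, hd]
  rcases le_or_gt (n % a) N with hrN | hNr
  · exact ⟨N * a + n % a, ⟨_, hrN, rfl⟩, d * a + 0, mul_add_mem_numSemigroupSucc d.zero_le,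
      by ring⟩
  · obtain ⟨c, hc⟩ := Nat.exists_eq_add_of_lt hNr
    exact ⟨N * a + N, ⟨N, le_rfl, rfl⟩, d * a + (c + 1), mul_add_mem_numSemigroupSucc (by omega),
      by rw [hc]; ring⟩

end PairPowGens

section Colon

variable {a : ℕ}

lemma forall_add_pairPowGens_iff {ℓ m : ℕ} (hℓ : ℓ + 2 ≤ a) (hm : m ∈ numSemigroupSucc a) :
    (∀ e ∈ pairPowGens a (a - 1), m + e ∈ {(a + 1) * ℓ} + (numSemigroupSucc a : Set ℕ)) ↔
      m ∈ insert ((a + 1) * ℓ) (pairPowGens a (ℓ + 1)) + (numSemigroupSucc a : Set ℕ) := by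
  have ha : 0 < a := by omega
  constructor
  · intro hcol
    obtain ⟨q, r, hrq, hra, rfl⟩ := exists_mul_add_of_mem_numSemigroupSucc ha hm
    rcases le_or_gt (ℓ + 1) q with hℓq | hqℓ
    · exact Set.add_subset_add_right (Set.subset_insert _ _)
        (mem_pairPowGens_add_of_mul_le ha hm (by nlinarith))
    rcases lt_or_ge r ℓ with hrℓ | hℓr
    · -- `e = (a-1)a + (ℓ-1-r)` leaves the cofactor `(q+b)a + (a-1)`, a gap (`a = ℓ+2+b`)
      exfalso
      obtain ⟨_, rfl, h, hh, heq⟩ := hcol ((a - 1) * a + (ℓ - 1 - r)) ⟨_, by omega, rfl⟩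
      obtain ⟨b, hb⟩ := Nat.exists_eq_add_of_le hℓ
      refine mul_add_notMem_numSemigroupSucc (a := a) (q := q + b) (r := a - 1)
        (by omega) (by omega) ?_
      suffices h = (q + b) * a + (a - 1) from this ▸ hh
      zify [(by omega : 1 ≤ a), (by omega : 1 ≤ ℓ), (by omega : r ≤ ℓ - 1)] at heq ⊢
      push_cast [hb] at heq ⊢
      linear_combination heq
    · obtain rfl : r = ℓ := by omega
      obtain rfl : q = r := by omega
      exact ⟨_, Set.mem_insert _ _, 0, zero_mem _, by ring⟩
  · rintro ⟨g, hg, h, hh, rfl⟩ e ⟨j', hj', rfl⟩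
    rcases hg with rfl | ⟨j, hj, rfl⟩
    · exact ⟨_, rfl, h + ((a - 1) * a + j'),
        add_mem hh (pairPowGens_subset left_mem_numSemigroupSucc right_mem_numSemigroupSucc _
          ⟨j', hj', rfl⟩), by ring⟩
    · -- the cofactor exceeds the conductor `(a-1)a`
      obtain ⟨x, hx⟩ := Nat.exists_eq_add_of_le (m := (a + 1) * ℓ + (a - 1) * a)
        (n := (ℓ + 1) * a + j + h + ((a - 1) * a + j')) (by nlinarith)
      exact ⟨_, rfl, (a - 1) * a + x, mem_numSemigroupSucc_of_le ha (Nat.le_add_right _ _),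
        by rw [hx]; ring⟩

end Colon

-- exponents of the generators of `(Q + 𝔪^(ℓ+1))^n = ∑_{c+d=n} Q^c 𝔪^((ℓ+1)d)`, `Q = (t^((a+1)ℓ))`
def colonPowGens (a ℓ n : ℕ) : Set ℕ :=
  {x | ∃ c d, c + d = n ∧ ∃ y ∈ pairPowGens a ((ℓ + 1) * d), x = c * ((a + 1) * ℓ) + y}

section ColonPowGens

variable {a ℓ : ℕ}

lemma colonPowGens_zero : colonPowGens a ℓ 0 = {0} := by
  ext x
  simp [colonPowGens, pairPowGens]

lemma colonPowGens_succ (n : ℕ) : colonPowGens a ℓ (n + 1) =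
    ({(a + 1) * ℓ} + colonPowGens a ℓ n) ∪ pairPowGens a ((ℓ + 1) * (n + 1)) := by
  ext x
  constructor
  · rintro ⟨_ | c, d, hcd, y, hy, rfl⟩
    · obtain rfl : d = n + 1 := by omega
      exact Or.inr (by simpa using hy)
    · exact Or.inl ⟨_, rfl, c * ((a + 1) * ℓ) + y, ⟨c, d, by omega, y, hy, rfl⟩, by ring⟩
  · rintro (⟨_, rfl, _, ⟨c, d, hcd, y, hy, rfl⟩, rfl⟩ | hx)
    · exact ⟨c + 1, d, by omega, y, hy, by ring⟩
    · exact ⟨0, n + 1, zero_add _, x, hx, by simp⟩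

lemma pairPowGens_subset_colonPowGens (n : ℕ) :
    pairPowGens a ((ℓ + 1) * n) ⊆ colonPowGens a ℓ n :=
  fun x hx => ⟨0, n, zero_add n, x, hx, by simp⟩

lemma colonPowGens_subset {H : AddSubmonoid ℕ} (ha : a ∈ H) (ha1 : a + 1 ∈ H) (n : ℕ) :
    colonPowGens a ℓ n ⊆ H := by
  rintro _ ⟨c, d, -, y, hy, rfl⟩
  have : c * ((a + 1) * ℓ) = (c * ℓ) • (a + 1) := by rw [smul_eq_mul]; ring
  exact this ▸ H.add_mem (H.nsmul_mem ha1 _) (pairPowGens_subset ha ha1 _ hy)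

lemma colonPowGens_finite (n : ℕ) : (colonPowGens a ℓ n).Finite := by
  induction n with
  | zero => simp [colonPowGens_zero]
  | succ n ih =>
    rw [colonPowGens_succ]
    exact ((Set.finite_singleton _).add ih).union (pairPowGens_finite _)

lemma pairPowGens_succ_subset_of_le (hℓ : ℓ ≤ a) {n : ℕ} (hn : a ≤ (ℓ + 1) * n + 1) :
    pairPowGens a ((ℓ + 1) * (n + 1)) ⊆
      {(a + 1) * ℓ} + pairPowGens a ((ℓ + 1) * n) + (numSemigroupSucc a : Set ℕ) := by
  rintro _ ⟨J, hJ, rfl⟩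
  have e1 : (ℓ + 1) * (n + 1) * a = (ℓ + 1) * n * a + ℓ * a + a := by ring
  have e2 : (a + 1) * ℓ = ℓ * a + ℓ := by ring
  have e3 : (ℓ + 1) * (n + 1) = (ℓ + 1) * n + ℓ + 1 := by ring
  rcases lt_or_ge J ℓ with hJℓ | hℓJ
  · exact ⟨_, ⟨_, rfl, _, ⟨a + J - ℓ, by omega, rfl⟩, rfl⟩, 0, zero_mem _,
      by beta_reduce; omega⟩
  rcases le_or_gt J ((ℓ + 1) * n + ℓ) with hJ' | hJ'
  · exact ⟨_, ⟨_, rfl, _, ⟨J - ℓ, by omega, rfl⟩, rfl⟩, a, left_mem_numSemigroupSucc,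
      by beta_reduce; omega⟩
  · exact ⟨_, ⟨_, rfl, _, ⟨(ℓ + 1) * n, le_rfl, rfl⟩, rfl⟩, a + 1, right_mem_numSemigroupSucc,
      by beta_reduce; omega⟩

lemma notMem_singleton_add_colonPowGens_add (hℓ : 1 ≤ ℓ) {n : ℕ} (hn : (ℓ + 1) * n + 2 ≤ a) :
    (ℓ + 1) * (n + 1) * a + (ℓ - 1) ∉
      {(a + 1) * ℓ} + colonPowGens a ℓ n + (numSemigroupSucc a : Set ℕ) := by
  rintro ⟨_, ⟨_, rfl, _, ⟨c, d, rfl, _, ⟨J, hJ, rfl⟩, rfl⟩, rfl⟩, h, hh, heq⟩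
  -- the cofactor `h = c a + (a - cℓ - J - 1)` is a gap
  have e1 : (ℓ + 1) * (c + d) = c * ℓ + c + (ℓ + 1) * d := by ring
  refine mul_add_notMem_numSemigroupSucc (a := a) (q := c) (r := a - (c * ℓ + J + 1))
    (by omega) (by omega) ?_
  suffices h = c * a + (a - (c * ℓ + J + 1)) from this ▸ hh
  zify [(by omega : c * ℓ + J + 1 ≤ a), hℓ] at heq ⊢
  linear_combination heq

lemma pairPowGens_succ_subset_iff (hℓ1 : 1 ≤ ℓ) (hℓ : ℓ + 2 ≤ a) (n : ℕ) :
    pairPowGens a ((ℓ + 1) * (n + 1)) ⊆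
      {(a + 1) * ℓ} + colonPowGens a ℓ n + (numSemigroupSucc a : Set ℕ) ↔
      a ≤ (ℓ + 1) * n + 1 := by
  refine ⟨fun hsub => ?_, fun hn => (pairPowGens_succ_subset_of_le (by omega) hn).trans
    (Set.add_subset_add_right (Set.add_subset_add_left (pairPowGens_subset_colonPowGens n)))⟩
  by_contra! hn
  have : ℓ - 1 ≤ (ℓ + 1) * (n + 1) :=
    (Nat.sub_le ℓ 1).trans ((Nat.le_succ ℓ).trans (Nat.le_mul_of_pos_right _ n.succ_pos))
  exact notMem_singleton_add_colonPowGens_add hℓ1 (by omega) (hsub ⟨ℓ - 1, this, rfl⟩)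

lemma inter_pairPowGens_succ_subset (hℓ : ℓ < a) (n : ℕ) :
    ({(a + 1) * ℓ} + (numSemigroupSucc a : Set ℕ)) ∩
        (pairPowGens a ((ℓ + 1) * (n + 1)) + (numSemigroupSucc a : Set ℕ)) ⊆
      {(a + 1) * ℓ} + pairPowGens a ((ℓ + 1) * n) + (numSemigroupSucc a : Set ℕ) := by
  rintro _ ⟨⟨_, rfl, h₀, hh₀, rfl⟩, ⟨_, ⟨J, -, rfl⟩, h, -, heq⟩⟩
  beta_reduce at heq
  have e1 : (ℓ + 1) * (n + 1) * a = (ℓ + 1) * n * a + ℓ * a + a := by ring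
  have e2 : (a + 1) * ℓ = ℓ * a + ℓ := by ring
  obtain ⟨_, hy, h', hh', rfl⟩ := mem_pairPowGens_add_of_mul_le (by omega) hh₀
    (N := (ℓ + 1) * n) (by omega)
  exact ⟨_, ⟨_, rfl, _, hy, rfl⟩, h', hh', by simp only [add_assoc]⟩

end ColonPowGens

section Ideals

variable {k : Type} [Field k] {a ℓ : ℕ}

lemma monomialIdeal_pair_pow {H : AddSubmonoid ℕ} (ha : a ∈ H) (ha1 : a + 1 ∈ H) (N : ℕ) :
    monomialIdeal k H {a, a + 1} ^ N = monomialIdeal k H (pairPowGens a N) := by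
  induction N with
  | zero => rw [pow_zero, pairPowGens_zero, monomialIdeal_zero, Ideal.one_eq_top]
  | succ N ih =>
    rw [pow_succ, ih, ← monomialIdeal_add (pairPowGens_subset ha ha1 N)
      (by simp [Set.insert_subset_iff, ha, ha1]), pairPowGens_add_pair]

lemma singleton_succ_mul_subset {H : AddSubmonoid ℕ} (ha1 : a + 1 ∈ H) (ℓ : ℕ) :
    {(a + 1) * ℓ} ⊆ (H : Set ℕ) := by
  rw [Set.singleton_subset_iff, mul_comm, ← smul_eq_mul]
  exact H.nsmul_mem ha1 ℓ

lemma sup_pow_eq_monomialIdeal_colonPowGens {H : AddSubmonoid ℕ} (ha : a ∈ H) (ha1 : a + 1 ∈ H)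
    (n : ℕ) : (monomialIdeal k H {(a + 1) * ℓ} ⊔ monomialIdeal k H {a, a + 1} ^ (ℓ + 1)) ^ n =
      monomialIdeal k H (colonPowGens a ℓ n) := by
  induction n with
  | zero => rw [pow_zero, colonPowGens_zero, monomialIdeal_zero, Ideal.one_eq_top]
  | succ n ih =>
    rw [Ideal.sup_pow_succ, ih, ← pow_mul, monomialIdeal_pair_pow ha ha1,
      ← monomialIdeal_add (singleton_succ_mul_subset ha1 ℓ) (colonPowGens_subset ha ha1 n),
      ← monomialIdeal_union, colonPowGens_succ]

end Ideals

section PairSemigroupRing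

variable (k : Type) [Field k] {a ℓ : ℕ}

local notation "𝓠" => monomialIdeal k (numSemigroupSucc a) {(a + 1) * ℓ}
local notation "𝓜" => monomialIdeal k (numSemigroupSucc a) {a, a + 1}

lemma colon_monomialIdeal_pairPowGens (hℓ : ℓ + 2 ≤ a) :
    (𝓠).colon (monomialIdeal k (numSemigroupSucc a) (pairPowGens a (a - 1)) :
        Set (ssr k (numSemigroupSucc a))) =
      𝓠 ⊔ monomialIdeal k (numSemigroupSucc a) (pairPowGens a (ℓ + 1)) := by
  have hs := singleton_succ_mul_subset (right_mem_numSemigroupSucc (a := a)) ℓ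
  have hgens := pairPowGens_subset (left_mem_numSemigroupSucc (a := a)) right_mem_numSemigroupSucc
  ext f
  rw [mem_colon_monomialIdeal_iff (Set.finite_singleton _) hs (hgens _), ← monomialIdeal_union,
    ← Set.insert_eq, mem_monomialIdeal_iff ((pairPowGens_finite _).insert _)
      (Set.insert_subset (hs rfl) (hgens _))]
  exact forall₂_congr fun n hn => forall_add_pairPowGens_iff hℓ (mem_of_coeff_ne_zero f hn)

lemma sup_pow_succ_eq_mul_pow_iff (hℓ1 : 1 ≤ ℓ) (hℓ : ℓ + 2 ≤ a) (n : ℕ) :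
    (𝓠 ⊔ 𝓜 ^ (ℓ + 1)) ^ (n + 1) = 𝓠 * (𝓠 ⊔ 𝓜 ^ (ℓ + 1)) ^ n ↔ a ≤ (ℓ + 1) * n + 1 := by
  have ha := left_mem_numSemigroupSucc (a := a)
  have ha1 := right_mem_numSemigroupSucc (a := a)
  rw [Ideal.sup_pow_succ, sup_eq_left, ← pow_mul, monomialIdeal_pair_pow ha ha1,
    sup_pow_eq_monomialIdeal_colonPowGens ha ha1,
    ← monomialIdeal_add (singleton_succ_mul_subset ha1 ℓ) (colonPowGens_subset ha ha1 n),
    monomialIdeal_le_iff (pairPowGens_subset ha ha1 _)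
      (AddSubmonoid.add_subset (singleton_succ_mul_subset ha1 ℓ) (colonPowGens_subset ha ha1 n)),
    pairPowGens_succ_subset_iff hℓ1 hℓ]

lemma inf_sup_pow_succ_eq_mul_pow (hℓ : ℓ < a) (n : ℕ) :
    𝓠 ⊓ (𝓠 ⊔ 𝓜 ^ (ℓ + 1)) ^ (n + 1) = 𝓠 * (𝓠 ⊔ 𝓜 ^ (ℓ + 1)) ^ n := by
  have ha := left_mem_numSemigroupSucc (a := a)
  have ha1 := right_mem_numSemigroupSucc (a := a)
  have hs := singleton_succ_mul_subset ha1 ℓ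
  rw [Ideal.sup_pow_succ, inf_comm, sup_inf_assoc_of_le _ Ideal.mul_le_left, sup_eq_left]
  calc (𝓜 ^ (ℓ + 1)) ^ (n + 1) ⊓ 𝓠 ≤ 𝓠 * 𝓜 ^ ((ℓ + 1) * n) := by
        rintro f ⟨hM, hQ⟩
        rw [← pow_mul, monomialIdeal_pair_pow ha ha1] at hM
        rw [monomialIdeal_pair_pow ha ha1, ← monomialIdeal_add hs (pairPowGens_subset ha ha1 _)]
        exact mem_monomialIdeal_of_support ((Set.finite_singleton _).add (pairPowGens_finite _))
          (AddSubmonoid.add_subset hs (pairPowGens_subset ha ha1 _)) fun m hm =>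
            inter_pairPowGens_succ_subset hℓ n
              ⟨mem_add_of_mem_monomialIdeal hQ hm, mem_add_of_mem_monomialIdeal hM hm⟩
    _ ≤ _ := Ideal.mul_mono_right (by rw [pow_mul]; exact Ideal.pow_right_mono le_sup_right n)

end PairSemigroupRing

theorem stmt16_general (k : Type) [Field k] (a : ℕ)
    (H : AddSubmonoid ℕ) (hH : H = AddSubmonoid.closure {a, a + 1})
    (haH : a ∈ H) (ha1H : a + 1 ∈ H)
    (ℓ : ℕ) (hℓ1 : 1 ≤ ℓ) (hℓ : ℓ < a - 1)
    (s : ℕ) (hsval : s = (a + 1) * ℓ) (hs : s ∈ H)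
    (𝔪 : Ideal (ssr k H)) (h𝔪 : 𝔪 = Ideal.span {tp k H a haH, tp k H (a + 1) ha1H})
    (Q : Ideal (ssr k H)) (hQ : Q = Ideal.span {tp k H s hs})
    (I : Ideal (ssr k H)) (hI : I = Submodule.colon Q ((𝔪 ^ (a - 1) : Ideal (ssr k H)) : Set (ssr k H))) :
    (∀ n : ℕ, I ^ (n + 1) = Q * I ^ n ↔ (a - 1 + ℓ) / (ℓ + 1) ≤ n) ∧
    sInf {n : ℕ | I ^ (n + 1) = Q * I ^ n} = (a - 1 + ℓ) / (ℓ + 1) ∧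
    ∀ n : ℕ, Q ⊓ I ^ (n + 1) = Q * I ^ n := by
  subst hH hsval
  obtain rfl := h𝔪.trans (span_tp_pair haH ha1H)
  obtain rfl := hQ.trans (span_tp_singleton hs)
  obtain rfl : I = _ ⊔ _ ^ (ℓ + 1) := by
    rw [hI, monomialIdeal_pair_pow haH ha1H, colon_monomialIdeal_pairPowGens k (by omega),
      monomialIdeal_pair_pow haH ha1H]
  have hred : ∀ n, _ ↔ (a - 1 + ℓ) / (ℓ + 1) ≤ n := fun n =>
    (sup_pow_succ_eq_mul_pow_iff k (a := a) hℓ1 (by omega) n).trans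
      (by rw [Nat.div_le_iff_le_mul_add_pred (by omega)]; omega)
  refine ⟨hred, ?_, inf_sup_pow_succ_eq_mul_pow k (by omega)⟩
  rw [show {n | _} = Set.Ici _ from Set.ext hred, csInf_Ici]

/-- Corollary 3.6 (2): for `q = a-1` and `s = (a+1)ℓ` (`1 ≤ ℓ < a-1`):
`I^{n+1} = QI^n` iff `n ≥ ⌈(a-1)/(ℓ+1)⌉`, so `r_Q(I) = ⌈(a-1)/(ℓ+1)⌉`; moreover
`Q ∩ I^{n+1} = QI^n` for all `n`, so `G(I)` is Cohen-Macaulay.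
(Note `⌈(a-1)/(ℓ+1)⌉ = (a - 1 + ℓ)/(ℓ + 1)` in natural division.) -/
theorem stmt16 (k : Type) [Field k] (a : ℕ) (ha : 2 ≤ a)
    (H : AddSubmonoid ℕ) (hH : H = AddSubmonoid.closure {a, a + 1})
    (haH : a ∈ H) (ha1H : a + 1 ∈ H)
    (ℓ : ℕ) (hℓ1 : 1 ≤ ℓ) (hℓ : ℓ < a - 1)
    (s : ℕ) (hsval : s = (a + 1) * ℓ) (hs : s ∈ H)
    (𝔪 : Ideal (ssr k H)) (h𝔪 : 𝔪 = Ideal.span {tp k H a haH, tp k H (a + 1) ha1H})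
    (Q : Ideal (ssr k H)) (hQ : Q = Ideal.span {tp k H s hs})
    (I : Ideal (ssr k H)) (hI : I = Submodule.colon Q ((𝔪 ^ (a - 1) : Ideal (ssr k H)) : Set (ssr k H))) :
    (∀ n : ℕ, I ^ (n + 1) = Q * I ^ n ↔ (a - 1 + ℓ) / (ℓ + 1) ≤ n) ∧
    sInf {n : ℕ | I ^ (n + 1) = Q * I ^ n} = (a - 1 + ℓ) / (ℓ + 1) ∧
    ∀ n : ℕ, Q ⊓ I ^ (n + 1) = Q * I ^ n :=
  stmt16_general k a H hH haH ha1H ℓ hℓ1 hℓ s hsval hs 𝔪 h𝔪 Q hQ I hI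
end
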